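/- arXiv:2505.21774 — 6 statements merged into one kernel-verified Lean document; each statement's English description precedes it below -/
import Mathlib

section
/- For every finite tree T on n vertices, N⁺ ≥ N⁻, i.e., the number of vertices with strictly positive friendship-bias is at least the number with strictly negative friendship-bias. -/
open Finset SimpleGraph
open scoped Classical

/-- The friendship-bias of a vertex `u`: the average degree of the neighbours of `u`
minus the degree of `u` (set to `0` for an isolated vertex). -/
noncomputable def bias {V : Type*} [Fintype V] (G : SimpleGraph V) (u : V) : ℝ :=
  if G.degree u = 0 then 0
  else (∑ v ∈ G.neighborFinset u, (G.degree v : ℝ)) / (G.degree u) - G.degree u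

namespace TreeSig

/-- integer sign -/
def sg (t : ℤ) : ℤ := if 0 < t then 1 else if t < 0 then -1 else 0

lemma sg_neg_one_le (t : ℤ) : -1 ≤ sg t := by unfold sg; split_ifs <;> omega
lemma sg_le_one (t : ℤ) : sg t ≤ 1 := by unfold sg; split_ifs <;> omega
lemma sg_of_pos {t : ℤ} (h : 0 < t) : sg t = 1 := by unfold sg; split_ifs <;> omega
lemma sg_of_zero : sg 0 = 0 := by unfold sg; split_ifs <;> omega
lemma sg_nonneg {t : ℤ} (h : 0 ≤ t) : 0 ≤ sg t := by unfold sg; split_ifs <;> omega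

/-- potential for rooted subtrees -/
def Phi (d : ℕ) (σ : ℤ) : ℤ :=
  if d ≤ 1 then 0
  else if d = 2 then (if σ ≤ -1 then 1 else σ)
  else max ((d : ℤ) - 1) (σ + ((d : ℤ) - 1) * ((d : ℤ) - 2))

lemma Phi_one (σ : ℤ) : Phi 1 σ = 0 := by simp [Phi]

lemma Phi_ge_of_ge_three {d : ℕ} (hd : 3 ≤ d) (σ : ℤ) : (d : ℤ) - 1 ≤ Phi d σ := by
  unfold Phi; split_ifs <;> first | omega | exact le_max_left _ _

/-- The per-child arithmetic bounds. `D` is the parent's degree, `e` the child's degree,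
`σ` the child's child-sum, `B` the child's strict-descendant sign sum. -/
lemma childC {D e : ℕ} {σ B : ℤ} (hD : 2 ≤ D) (he : 1 ≤ e)
    (h1 : e = 1 → σ = 0) (h2 : e = 2 → -1 ≤ σ)
    (hB : Phi e σ ≤ B) :
    ((e : ℤ) - 2 ≤ B + sg (σ + ((D : ℤ) - e))) ∧
    (3 ≤ D → 1 ≤ B + sg (σ + ((D : ℤ) - e))) ∧
    (0 ≤ B + sg (σ + ((D : ℤ) - e))) ∧
    (e = 1 → 1 ≤ B + sg (σ + ((D : ℤ) - e))) := by
  have hs1 := sg_neg_one_le (σ + ((D : ℤ) - e))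
  rcases Nat.lt_or_ge e 3 with he3 | he3
  · interval_cases e
    · -- e = 1
      have hσ : σ = 0 := h1 rfl
      subst hσ
      push_cast at hs1 ⊢
      have hB0 : (0:ℤ) ≤ B := by simpa [Phi_one] using hB
      have : sg (0 + ((D : ℤ) - 1)) = 1 := sg_of_pos (by push_cast; omega)
      rw [this]
      refine ⟨by omega, fun _ => by omega, by omega, fun _ => by omega⟩
    · -- e = 2
      have hσ : -1 ≤ σ := h2 rfl
      push_cast at hs1 ⊢
      rcases le_or_gt σ (-1) with hc | hc
      · have hσ1 : σ = -1 := le_antisymm hc hσ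
        subst hσ1
        have hB1 : (1:ℤ) ≤ B := by simpa [Phi] using hB
        constructor
        · omega
        refine ⟨fun h3 => ?_, by omega, by simp⟩
        have : (0:ℤ) ≤ sg (-1 + ((D:ℤ) - 2)) := sg_nonneg (by push_cast; omega)
        omega
      · have hσ0 : 0 ≤ σ := by omega
        have hBσ : σ ≤ B := by
          have : Phi 2 σ = σ := by simp [Phi]; omega
          omega
        have hsn : 0 ≤ sg (σ + ((D:ℤ) - 2)) := sg_nonneg (by push_cast; omega)
        refine ⟨by omega, fun h3 => ?_, by omega, by simp⟩
        have : sg (σ + ((D:ℤ) - 2)) = 1 := sg_of_pos (by push_cast; omega)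
        omega
  · -- e ≥ 3
    have hBe : (e : ℤ) - 1 ≤ B := le_trans (Phi_ge_of_ge_three he3 σ) hB
    have he3' : (3:ℤ) ≤ (e:ℤ) := by exact_mod_cast he3
    refine ⟨by omega, fun _ => by omega, by omega, fun h => by omega⟩


variable {V : Type*} [Fintype V] {G : SimpleGraph V}

/-- the canonical path from `r` to `w` in a tree -/
noncomputable def pt (hT : G.IsTree) (r w : V) : G.Walk r w :=
  (hT.existsUnique_path r w).choose

lemma pt_isPath (hT : G.IsTree) (r w : V) : (pt hT r w).IsPath :=
  (hT.existsUnique_path r w).choose_spec.1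

lemma pt_eq (hT : G.IsTree) {r w : V} (q : G.Walk r w) (hq : q.IsPath) : q = pt hT r w :=
  (hT.existsUnique_path r w).choose_spec.2 q hq

lemma pt_self (hT : G.IsTree) (r : V) : pt hT r r = Walk.nil :=
  (pt_eq hT Walk.nil Walk.IsPath.nil).symm

lemma single_edge_isPath {u v : V} (h : G.Adj u v) :
    (Walk.cons h Walk.nil : G.Walk u v).IsPath := by
  simp [Walk.isPath_def, h.ne]

/-- If `u ~ v` and `u` lies on the path to `v`, the path to `v` extends the path to `u`. -/
lemma pt_concat (hT : G.IsTree) {r u v : V} (h : G.Adj u v)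
    (hu : u ∈ (pt hT r v).support) : pt hT r v = (pt hT r u).concat h := by
  have htake : ((pt hT r v).takeUntil u hu) = pt hT r u :=
    pt_eq hT _ ((pt_isPath hT r v).takeUntil hu)
  have hdrop : ((pt hT r v).dropUntil u hu) = Walk.cons h Walk.nil := by
    have h1 : ((pt hT r v).dropUntil u hu).IsPath := (pt_isPath hT r v).dropUntil hu
    have h2 := (hT.existsUnique_path u v).unique h1 (single_edge_isPath h)
    exact h2
  have := (pt hT r v).take_spec hu
  rw [htake, hdrop] at this
  rw [← this, Walk.concat_eq_append]

lemma not_both (hT : G.IsTree) {r u v : V} (h : G.Adj u v)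
    (hu : u ∈ (pt hT r v).support) : v ∉ (pt hT r u).support := by
  intro hv
  have h1 := pt_concat hT h hu
  have h2 : (pt hT r v).support.Nodup := (pt_isPath hT r v).support_nodup
  rw [h1, Walk.support_concat] at h2
  have := List.disjoint_of_nodup_append h2
  exact this hv (by simp)

/-- If `u ~ v` and `u` is NOT on the path to `v`, then the path to `u` extends the path to `v`. -/
lemma pt_concat' (hT : G.IsTree) {r u v : V} (h : G.Adj u v)
    (hu : u ∉ (pt hT r v).support) : pt hT r u = (pt hT r v).concat h.symm := by
  refine (pt_eq hT _ ?_).symm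
  rw [Walk.isPath_def, Walk.support_concat]
  refine List.Nodup.append (pt_isPath hT r v).support_nodup (by simp) ?_
  simp only [List.disjoint_singleton]
  exact hu

/-- dichotomy for adjacent vertices -/
lemma adj_cases (hT : G.IsTree) {r u v : V} (h : G.Adj u v) :
    u ∈ (pt hT r v).support ∨ v ∈ (pt hT r u).support := by
  by_cases hu : u ∈ (pt hT r v).support
  · exact Or.inl hu
  · right
    rw [pt_concat' hT h hu, Walk.support_concat]
    simp [Walk.end_mem_support]



/-- children of `u` w.r.t. root `r` -/
noncomputable def chl (hT : G.IsTree) (r u : V) : Finset V :=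
  univ.filter fun c => G.Adj u c ∧ u ∈ (pt hT r c).support

/-- subtree of `u` (all `w` whose root-path passes through `u`) -/
noncomputable def sub (hT : G.IsTree) (r u : V) : Finset V :=
  univ.filter fun w => u ∈ (pt hT r w).support

lemma mem_chl {hT : G.IsTree} {r u c : V} :
    c ∈ chl hT r u ↔ G.Adj u c ∧ u ∈ (pt hT r c).support := by
  simp [chl]

lemma mem_sub {hT : G.IsTree} {r u w : V} :
    w ∈ sub hT r u ↔ u ∈ (pt hT r w).support := by simp [sub]

lemma self_mem_sub (hT : G.IsTree) (r u : V) : u ∈ sub hT r u :=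
  mem_sub.2 (Walk.end_mem_support _)

lemma sub_root (hT : G.IsTree) (r : V) : sub hT r r = univ := by
  ext w; simp [mem_sub, Walk.start_mem_support]

lemma chl_root (hT : G.IsTree) (r : V) : chl hT r r = G.neighborFinset r := by
  ext c; simp [mem_chl, Walk.start_mem_support, mem_neighborFinset]

lemma chl_ne_root {hT : G.IsTree} {r u c : V} (hc : c ∈ chl hT r u) : c ≠ r := by
  rintro rfl
  rcases mem_chl.1 hc with ⟨hadj, hmem⟩
  rw [pt_self] at hmem
  simp only [Walk.support_nil, List.mem_singleton] at hmem
  subst hmem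
  exact G.irrefl hadj

/-- the path to a member of the subtree of `u` passes through `u`;
its prefix up to a child `c` is `pt r c`. -/
lemma takeUntil_eq_pt (hT : G.IsTree) {r c w : V} (hc : c ∈ (pt hT r w).support) :
    (pt hT r w).takeUntil c hc = pt hT r c :=
  pt_eq hT _ ((pt_isPath hT r w).takeUntil hc)

lemma sub_subset (hT : G.IsTree) {r u c : V} (hc : c ∈ chl hT r u) :
    sub hT r c ⊆ (sub hT r u) \ {u} := by
  rcases mem_chl.1 hc with ⟨hadj, humem⟩
  intro w hw
  have hcw : c ∈ (pt hT r w).support := mem_sub.1 hw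
  have hsub : (pt hT r c).support ⊆ (pt hT r w).support := by
    rw [← takeUntil_eq_pt hT hcw]
    exact Walk.support_takeUntil_subset _ hcw
  have huw : u ∈ (pt hT r w).support := hsub humem
  rw [Finset.mem_sdiff, Finset.mem_singleton]
  refine ⟨mem_sub.2 huw, ?_⟩
  rintro rfl
  exact (not_both hT hadj humem) hcw

lemma support_chl_len (hT : G.IsTree) {r u c : V} (hc : c ∈ chl hT r u) :
    (pt hT r c).support = (pt hT r u).support ++ [c] := by
  rcases mem_chl.1 hc with ⟨hadj, humem⟩
  rw [pt_concat hT hadj humem, Walk.support_concat]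

lemma pt_prefix (hT : G.IsTree) {r c w : V} (hc : c ∈ (pt hT r w).support) :
    (pt hT r c).support <+: (pt hT r w).support := by
  conv_rhs => rw [← (pt hT r w).take_spec hc]
  rw [Walk.support_append, takeUntil_eq_pt hT hc]
  exact List.prefix_append _ _

lemma sub_disjoint (hT : G.IsTree) {r u : V} {c₁ c₂ : V}
    (h1 : c₁ ∈ chl hT r u) (h2 : c₂ ∈ chl hT r u) (hne : c₁ ≠ c₂) :
    Disjoint (sub hT r c₁) (sub hT r c₂) := by
  rw [Finset.disjoint_left]
  intro w hw1 hw2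
  have p1 := pt_prefix hT (mem_sub.1 hw1)
  have p2 := pt_prefix hT (mem_sub.1 hw2)
  have l1 := support_chl_len hT h1
  have l2 := support_chl_len hT h2
  have hlen : (pt hT r c₁).support.length = (pt hT r c₂).support.length := by
    rw [l1, l2]; simp
  have heq : (pt hT r c₁).support = (pt hT r c₂).support := by
    have := List.prefix_of_prefix_length_le p1 p2 (le_of_eq hlen)
    exact List.IsPrefix.eq_of_length this hlen
  rw [l1, l2] at heq
  exact hne (by simpa using List.append_inj_right heq rfl)

lemma sub_cover (hT : G.IsTree) {r u w : V} (hw : w ∈ sub hT r u) (hne : w ≠ u) :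
    ∃ c ∈ chl hT r u, w ∈ sub hT r c := by
  have huw : u ∈ (pt hT r w).support := mem_sub.1 hw
  have hspec := (pt hT r w).take_spec huw
  cases hdr : (pt hT r w).dropUntil u huw with
  | nil => exact absurd rfl hne
  | @cons _ c _ hadj q' =>
    rw [hdr, takeUntil_eq_pt hT huw] at hspec
    have hpw : pt hT r w = ((pt hT r u).concat hadj).append q' := by
      rw [Walk.concat_append]
      exact hspec.symm
    have hpc : ((pt hT r u).concat hadj).IsPath := by
      apply Walk.IsPath.of_append_left (q := q')
      rw [← hpw]; exact pt_isPath hT r w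
    have hptc : pt hT r c = (pt hT r u).concat hadj := (pt_eq hT _ hpc).symm
    have hcu : u ∈ (pt hT r c).support := by
      rw [hptc, Walk.support_concat]
      exact List.mem_append_left _ (Walk.end_mem_support _)
    refine ⟨c, mem_chl.2 ⟨hadj, hcu⟩, mem_sub.2 ?_⟩
    rw [hpw, Walk.mem_support_append_iff]
    exact Or.inl (Walk.end_mem_support _)

/-- the degree-difference sum `t_u` -/
noncomputable def tval (G : SimpleGraph V) (u : V) : ℤ :=
  ∑ v ∈ G.neighborFinset u, ((G.degree v : ℤ) - (G.degree u : ℤ))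

/-- child-sum `σ_u` -/
noncomputable def sig (hT : G.IsTree) (r u : V) : ℤ :=
  ∑ c ∈ chl hT r u, ((G.degree c : ℤ) - (G.degree u : ℤ))

lemma parent_unique (hT : G.IsTree) {r c x y : V} (hx : G.Adj x c) (hy : G.Adj y c)
    (hxs : x ∈ (pt hT r c).support) (hys : y ∈ (pt hT r c).support)
    (hxc : c ∉ (pt hT r x).support) (hyc : c ∉ (pt hT r y).support) : x = y := by
  have ex : pt hT r c = (pt hT r x).concat hx := pt_concat hT hx hxs
  have ey : pt hT r c = (pt hT r y).concat hy := pt_concat hT hy hys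
  have hsx : (pt hT r c).support = (pt hT r x).support ++ [c] := by
    rw [ex, Walk.support_concat]
  have hsy : (pt hT r c).support = (pt hT r y).support ++ [c] := by
    rw [ey, Walk.support_concat]
  have heq : (pt hT r x).support = (pt hT r y).support := by
    have := hsx.symm.trans hsy
    refine List.append_inj_left this ?_
    have := congrArg List.length this
    simpa using this
  have hgx := (pt hT r x).getLast_support
  have hgy := (pt hT r y).getLast_support
  rw [← hgx, ← hgy]
  congr 1

/-- for a child `c` of `u`, the neighbours of `c` are `u` plus the children of `c` -/
lemma nbr_child (hT : G.IsTree) {r u c : V} (hc : c ∈ chl hT r u) :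
    G.neighborFinset c = insert u (chl hT r c) ∧ u ∉ chl hT r c := by
  rcases mem_chl.1 hc with ⟨hadj, humem⟩
  have hnotchl : u ∉ chl hT r c := by
    intro h
    exact (not_both hT hadj humem) (mem_chl.1 h).2
  refine ⟨?_, hnotchl⟩
  ext v
  simp only [mem_neighborFinset, Finset.mem_insert]
  constructor
  · intro hv
    by_cases hcs : c ∈ (pt hT r v).support
    · exact Or.inr (mem_chl.2 ⟨hv, hcs⟩)
    · left
      have hvmem : v ∈ (pt hT r c).support := by
        rcases adj_cases hT hv with h | h
        · exact absurd h hcs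
        · exact h
      have hcv : c ∉ (pt hT r u).support := not_both hT hadj humem
      exact parent_unique hT hv.symm hadj hvmem humem hcs hcv
  · rintro (rfl | h)
    · exact hadj.symm
    · exact (mem_chl.1 h).1

lemma degree_child (hT : G.IsTree) {r u c : V} (hc : c ∈ chl hT r u) :
    G.degree c = (chl hT r c).card + 1 := by
  obtain ⟨he, hn⟩ := nbr_child hT hc
  rw [← card_neighborFinset_eq_degree, he, Finset.card_insert_of_notMem hn]

lemma tval_child (hT : G.IsTree) {r u c : V} (hc : c ∈ chl hT r u) :
    tval G c = sig hT r c + ((G.degree u : ℤ) - (G.degree c : ℤ)) := by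
  obtain ⟨he, hn⟩ := nbr_child hT hc
  rw [tval, he, Finset.sum_insert hn, sig]
  ring

lemma degree_pos_of_mem_chl {hT : G.IsTree} {r u c : V} (hc : c ∈ chl hT r u) :
    1 ≤ G.degree c := by
  have : u ∈ G.neighborFinset c := by
    rw [mem_neighborFinset]
    exact (mem_chl.1 hc).1.symm
  have := Finset.card_pos.2 ⟨u, this⟩
  rw [card_neighborFinset_eq_degree] at this
  omega

lemma sig_feas1 (hT : G.IsTree) {r u c : V} (hc : c ∈ chl hT r u)
    (h1 : G.degree c = 1) : sig hT r c = 0 := by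
  have := degree_child hT hc
  have hempty : chl hT r c = ∅ := by
    rw [← Finset.card_eq_zero]; omega
  rw [sig, hempty, Finset.sum_empty]

lemma sig_feas2 (hT : G.IsTree) {r u c : V} (hc : c ∈ chl hT r u)
    (h2 : G.degree c = 2) : -1 ≤ sig hT r c := by
  have hcard := degree_child hT hc
  rw [sig]
  have hone : (chl hT r c).card = 1 := by omega
  obtain ⟨g, hg⟩ := Finset.card_eq_one.1 hone
  rw [hg, Finset.sum_singleton]
  have : 1 ≤ G.degree g := degree_pos_of_mem_chl (hg ▸ Finset.mem_singleton_self g : g ∈ chl hT r c)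
  push_cast [h2]
  omega

lemma exists_parent (hT : G.IsTree) {r c : V} (hc : c ≠ r) : ∃ x, c ∈ chl hT r x := by
  cases hp : pt hT r c with
  | nil => exact absurd rfl hc
  | cons h q =>
    obtain ⟨x, q', h', heq⟩ := Walk.exists_cons_eq_concat h q
    have hpc : pt hT r c = q'.concat h' := by rw [hp, heq]
    have hq' : q'.IsPath := by
      apply Walk.IsPath.of_append_left (q := Walk.cons h' Walk.nil)
      rw [← Walk.concat_eq_append, ← hpc]
      exact pt_isPath hT r c
    have hqx : q' = pt hT r x := pt_eq hT _ hq'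
    refine ⟨x, mem_chl.2 ⟨h', ?_⟩⟩
    rw [hpc, Walk.support_concat]
    exact List.mem_append_left _ (Walk.end_mem_support _)

lemma degree_nonroot (hT : G.IsTree) {r u : V} (hu : u ≠ r) :
    G.degree u = (chl hT r u).card + 1 := by
  obtain ⟨x, hx⟩ := exists_parent hT hu
  exact degree_child hT hx

lemma sub_decomp (hT : G.IsTree) (r u : V) :
    (sub hT r u) \ {u} = (chl hT r u).biUnion (fun c => sub hT r c) := by
  ext w
  simp only [Finset.mem_biUnion]
  constructor
  · intro hw
    rw [Finset.mem_sdiff, Finset.mem_singleton] at hw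
    exact sub_cover hT hw.1 hw.2
  · rintro ⟨c, hc, hw⟩
    exact sub_subset hT hc hw

lemma sum_decomp (hT : G.IsTree) (r u : V) (f : V → ℤ) :
    ∑ w ∈ (sub hT r u) \ {u}, f w
      = ∑ c ∈ chl hT r u, (f c + ∑ w ∈ (sub hT r c) \ {c}, f w) := by
  rw [sub_decomp hT r u, Finset.sum_biUnion]
  · refine Finset.sum_congr rfl fun c hc => ?_
    rw [Finset.sum_eq_sum_sdiff_singleton_add (self_mem_sub hT r c)]
    ring
  · intro c1 h1 c2 h2 hne
    exact sub_disjoint hT h1 h2 hne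

lemma card_sub_lt (hT : G.IsTree) {r u c : V} (hc : c ∈ chl hT r u) :
    (sub hT r c).card < (sub hT r u).card := by
  have h1 : sub hT r c ⊆ (sub hT r u) \ {u} := sub_subset hT hc
  have h2 := Finset.card_le_card h1
  have h3 : ((sub hT r u) \ {u}).card = (sub hT r u).card - 1 := by
    rw [Finset.card_sdiff_of_subset (by simp [self_mem_sub hT r u])]
    simp
  have h4 : 1 ≤ (sub hT r u).card := Finset.card_pos.2 ⟨u, self_mem_sub hT r u⟩
  omega

/-- The key invariant: sign-sum over strict descendants is at least `Phi`. -/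
lemma key (hT : G.IsTree) (r : V) : ∀ N : ℕ, ∀ u : V, u ≠ r → (sub hT r u).card ≤ N →
    Phi (G.degree u) (sig hT r u) ≤ ∑ w ∈ (sub hT r u) \ {u}, sg (tval G w) := by
  intro N
  induction N with
  | zero => intro u _ hcard; exact absurd hcard (by
      have := Finset.card_pos.2 ⟨u, self_mem_sub hT r u⟩; omega)
  | succ N ih =>
    intro u hu hcard
    have hdeg : G.degree u = (chl hT r u).card + 1 := degree_nonroot hT hu
    rw [sum_decomp hT r u]
    -- per-child bounds
    have hchild : ∀ c ∈ chl hT r u,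
        ((G.degree c : ℤ) - 2 ≤ sg (tval G c) + ∑ w ∈ (sub hT r c) \ {c}, sg (tval G w)) ∧
        (3 ≤ G.degree u → 1 ≤ sg (tval G c) + ∑ w ∈ (sub hT r c) \ {c}, sg (tval G w)) ∧
        (0 ≤ sg (tval G c) + ∑ w ∈ (sub hT r c) \ {c}, sg (tval G w)) ∧
        (G.degree c = 1 → 1 ≤ sg (tval G c) + ∑ w ∈ (sub hT r c) \ {c}, sg (tval G w)) := by
      intro c hc
      have hcr : c ≠ r := chl_ne_root hc
      have hBc : Phi (G.degree c) (sig hT r c) ≤ ∑ w ∈ (sub hT r c) \ {c}, sg (tval G w) := by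
        apply ih c hcr
        have := card_sub_lt hT hc
        omega
      have hD : 2 ≤ G.degree u := by
        rw [hdeg]
        have : (chl hT r u).card ≠ 0 := by
          rw [Finset.card_ne_zero]; exact ⟨c, hc⟩
        omega
      have he : 1 ≤ G.degree c := degree_pos_of_mem_chl hc
      have h1 : G.degree c = 1 → sig hT r c = 0 := fun h => sig_feas1 hT hc h
      have h2 : G.degree c = 2 → -1 ≤ sig hT r c := fun h => sig_feas2 hT hc h
      have := childC hD he h1 h2 hBc
      have htc : tval G c = sig hT r c + ((G.degree u : ℤ) - (G.degree c : ℤ)) :=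
        tval_child hT hc
      rw [← htc] at this
      obtain ⟨a1, a2, a3, a4⟩ := this
      exact ⟨by linarith, fun h => by linarith [a2 h], by linarith,
        fun h => by linarith [a4 h]⟩
    rcases Nat.lt_or_ge (chl hT r u).card 2 with hk | hk
    · rcases Nat.lt_or_ge (chl hT r u).card 1 with hk0 | hk1
      · -- leaf
        have hempty : chl hT r u = ∅ := by
          rw [← Finset.card_eq_zero]; omega
        rw [hempty]
        simp only [Finset.sum_empty]
        have : G.degree u = 1 := by rw [hdeg, hempty]; simp
        rw [this, Phi_one]
      · -- exactly one child
        have hone : (chl hT r u).card = 1 := by omega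
        obtain ⟨c, hcs⟩ := Finset.card_eq_one.1 hone
        have hc : c ∈ chl hT r u := hcs ▸ Finset.mem_singleton_self c
        obtain ⟨cl1, cl2, cl3, cl4⟩ := hchild c hc
        have hd2 : G.degree u = 2 := by rw [hdeg]; omega
        rw [hcs, Finset.sum_singleton, hd2]
        rw [sig, hcs, Finset.sum_singleton, hd2]
        have he : 1 ≤ G.degree c := degree_pos_of_mem_chl hc
        rcases Nat.lt_or_ge (G.degree c) 3 with he3 | he3
        · interval_cases hec : (G.degree c)
          · -- degree 1
            have h5 := cl4 rfl
            norm_num [Phi]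
            convert h5 using 2
          · -- degree 2
            norm_num [Phi]
            convert cl3 using 2
        · have h3 : (3:ℤ) ≤ (G.degree c : ℤ) := by exact_mod_cast he3
          have h5 : Phi 2 ((G.degree c : ℤ) - 2) = (G.degree c : ℤ) - 2 := by
            unfold Phi
            split_ifs <;> omega
          push_cast
          rw [h5]
          exact cl1
    · -- at least two children
      have hd3 : 3 ≤ G.degree u := by omega
      have hPhi : Phi (G.degree u) (sig hT r u)
          = max ((G.degree u : ℤ) - 1)
              (sig hT r u + ((G.degree u : ℤ) - 1) * ((G.degree u : ℤ) - 2)) := by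
        unfold Phi
        split_ifs <;> first | rfl | omega
      rw [hPhi, max_le_iff]
      constructor
      · -- bound by number of children
        have : ∀ c ∈ chl hT r u,
            (1:ℤ) ≤ sg (tval G c) + ∑ w ∈ (sub hT r c) \ {c}, sg (tval G w) :=
          fun c hc => (hchild c hc).2.1 hd3
        have hsum := Finset.sum_le_sum this
        rw [Finset.sum_const] at hsum
        have : ((chl hT r u).card : ℤ) = (G.degree u : ℤ) - 1 := by
          rw [hdeg]; push_cast; ring
        rw [← this]
        simpa using hsum
      · -- bound by degree sum
        have hb : ∀ c ∈ chl hT r u,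
            ((G.degree c : ℤ) - 2) ≤ sg (tval G c) + ∑ w ∈ (sub hT r c) \ {c}, sg (tval G w) :=
          fun c hc => (hchild c hc).1
        have hsum := Finset.sum_le_sum hb
        have hre : ∑ c ∈ chl hT r u, ((G.degree c : ℤ) - 2)
            = sig hT r u + ((G.degree u : ℤ) - 1) * ((G.degree u : ℤ) - 2) := by
          rw [sig]
          have : ∀ c ∈ chl hT r u, ((G.degree c : ℤ) - 2)
              = ((G.degree c : ℤ) - (G.degree u : ℤ)) + ((G.degree u : ℤ) - 2) := by
            intro c _; ring
          rw [Finset.sum_congr rfl this, Finset.sum_add_distrib, Finset.sum_const]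
          have hcard : ((chl hT r u).card : ℤ) = (G.degree u : ℤ) - 1 := by
            rw [hdeg]; push_cast; ring
          rw [nsmul_eq_mul, hcard]
        rw [← hre]
        exact hsum

lemma tval_root (hT : G.IsTree) (r : V) : tval G r = sig hT r r := by
  rw [tval, sig, chl_root]

lemma degree_root (hT : G.IsTree) (r : V) : G.degree r = (chl hT r r).card := by
  rw [chl_root, card_neighborFinset_eq_degree]

lemma key_child_root (hT : G.IsTree) {r c : V} (hc : c ∈ chl hT r r) :
    (3 ≤ G.degree r → 1 ≤ sg (tval G c) + ∑ w ∈ (sub hT r c) \ {c}, sg (tval G w)) ∧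
    (2 ≤ G.degree r → 0 ≤ sg (tval G c) + ∑ w ∈ (sub hT r c) \ {c}, sg (tval G w)) ∧
    (2 ≤ G.degree r → G.degree c = 1 →
      1 ≤ sg (tval G c) + ∑ w ∈ (sub hT r c) \ {c}, sg (tval G w)) := by
  have hcr : c ≠ r := chl_ne_root hc
  have hBc : Phi (G.degree c) (sig hT r c) ≤ ∑ w ∈ (sub hT r c) \ {c}, sg (tval G w) :=
    key hT r _ c hcr le_rfl
  have he : 1 ≤ G.degree c := degree_pos_of_mem_chl hc
  have h1 : G.degree c = 1 → sig hT r c = 0 := fun h => sig_feas1 hT hc h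
  have h2 : G.degree c = 2 → -1 ≤ sig hT r c := fun h => sig_feas2 hT hc h
  have htc : tval G c = sig hT r c + ((G.degree r : ℤ) - (G.degree c : ℤ)) :=
    tval_child hT hc
  refine ⟨fun h3 => ?_, fun h2' => ?_, fun h2' hc1 => ?_⟩
  · obtain ⟨_, a2, _, _⟩ := childC (D := G.degree r) (by omega) he h1 h2 hBc
    rw [← htc] at a2
    linarith [a2 h3]
  · obtain ⟨_, _, a3, _⟩ := childC (D := G.degree r) h2' he h1 h2 hBc
    rw [← htc] at a3
    linarith
  · obtain ⟨_, _, _, a4⟩ := childC (D := G.degree r) h2' he h1 h2 hBc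
    rw [← htc] at a4
    linarith [a4 hc1]

/-- total sign sum is nonnegative -/
lemma total_nonneg (hT : G.IsTree) (r : V) : 0 ≤ ∑ w : V, sg (tval G w) := by
  have hsplit : ∑ w : V, sg (tval G w)
      = sg (tval G r) + ∑ c ∈ chl hT r r,
          (sg (tval G c) + ∑ w ∈ (sub hT r c) \ {c}, sg (tval G w)) := by
    rw [← sum_decomp hT r r]
    have : (univ : Finset V) = sub hT r r := (sub_root hT r).symm
    rw [this, Finset.sum_eq_sum_sdiff_singleton_add (self_mem_sub hT r r)]
    ring
  rw [hsplit]
  set k := (chl hT r r).card with hk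
  have hdr : G.degree r = k := degree_root hT r
  rcases Nat.lt_or_ge k 2 with hk2 | hk2
  · rcases Nat.lt_or_ge k 1 with hk1 | hk1
    · -- no children
      have hempty : chl hT r r = ∅ := by rw [← Finset.card_eq_zero]; omega
      have : tval G r = 0 := by
        rw [tval_root hT r, sig, hempty, Finset.sum_empty]
      rw [this, hempty]
      simp [sg_of_zero]
    · -- one child
      have hone : k = 1 := by omega
      obtain ⟨c, hcs⟩ := Finset.card_eq_one.1 (by rw [← hk]; omega : (chl hT r r).card = 1)
      have hc : c ∈ chl hT r r := hcs ▸ Finset.mem_singleton_self c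
      have hcr : c ≠ r := chl_ne_root hc
      have hBc : Phi (G.degree c) (sig hT r c) ≤ ∑ w ∈ (sub hT r c) \ {c}, sg (tval G w) :=
        key hT r _ c hcr le_rfl
      have he : 1 ≤ G.degree c := degree_pos_of_mem_chl hc
      have htr : tval G r = (G.degree c : ℤ) - 1 := by
        rw [tval_root hT r, sig, hcs, Finset.sum_singleton, hdr, hone]
        push_cast
        ring
      have htc : tval G c = sig hT r c + (1 - (G.degree c : ℤ)) := by
        rw [tval_child hT hc, hdr, hone]
        push_cast
        ring
      rw [hcs, Finset.sum_singleton]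
      rcases Nat.lt_or_ge (G.degree c) 3 with he3 | he3
      · rcases (show G.degree c = 1 ∨ G.degree c = 2 by omega) with hec | hec
        · -- child is a leaf (n = 2)
          have hσ : sig hT r c = 0 := sig_feas1 hT hc hec
          have h0 : tval G c = 0 := by rw [htc, hσ, hec]; try push_cast; try ring
          have h1 : tval G r = 0 := by rw [htr, hec]; try push_cast; try ring
          have hB0 : (0:ℤ) ≤ ∑ w ∈ (sub hT r c) \ {c}, sg (tval G w) := by
            calc (0:ℤ) = Phi (G.degree c) (sig hT r c) := by rw [hec, hσ, Phi_one]
            _ ≤ _ := hBc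
          rw [h0, h1, sg_of_zero]
          omega
        · -- child has degree 2
          have hσ : -1 ≤ sig hT r c := sig_feas2 hT hc hec
          have h1 : tval G r = 1 := by rw [htr, hec]; try push_cast; try ring
          have htc2 : tval G c = sig hT r c - 1 := by rw [htc, hec]; try push_cast; try ring
          rw [h1, sg_of_pos (by norm_num : (0:ℤ) < 1)]
          have hs := sg_neg_one_le (tval G c)
          rcases le_or_gt (sig hT r c) (-1) with hσ1 | hσ1
          · have : Phi (G.degree c) (sig hT r c) = 1 := by
              rw [hec]; unfold Phi; split_ifs <;> omega
            omega
          · have : Phi (G.degree c) (sig hT r c) = sig hT r c := by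
              rw [hec]; unfold Phi; split_ifs <;> omega
            omega
      · -- child has degree ≥ 3
        have hP := Phi_ge_of_ge_three he3 (sig hT r c)
        have h3 : (3:ℤ) ≤ (G.degree c : ℤ) := by exact_mod_cast he3
        have h1 : sg (tval G r) = 1 := by
          rw [htr]; exact sg_of_pos (by omega)
        have hs := sg_neg_one_le (tval G c)
        rw [h1]
        omega
  · -- k ≥ 2
    have hD2 : 2 ≤ G.degree r := by omega
    rcases Nat.lt_or_ge k 3 with hk3 | hk3
    · -- exactly two children
      have htwo : (chl hT r r).card = 2 := by omega
      obtain ⟨c₁, c₂, hne, hcs⟩ := Finset.card_eq_two.1 htwo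
      have hc₁ : c₁ ∈ chl hT r r := by rw [hcs]; simp
      have hc₂ : c₂ ∈ chl hT r r := by rw [hcs]; simp
      have he₁ : 1 ≤ G.degree c₁ := degree_pos_of_mem_chl hc₁
      have he₂ : 1 ≤ G.degree c₂ := degree_pos_of_mem_chl hc₂
      obtain ⟨_, b₁, d₁⟩ := key_child_root hT hc₁
      obtain ⟨_, b₂, d₂⟩ := key_child_root hT hc₂
      have htr : tval G r = (G.degree c₁ : ℤ) + (G.degree c₂ : ℤ) - 4 := by
        rw [tval_root hT r, sig, hcs, Finset.sum_pair hne, hdr]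
        have : k = 2 := by omega
        rw [this]
        push_cast
        ring
      rw [hcs, Finset.sum_pair hne]
      rcases Nat.lt_or_ge (G.degree c₁ + G.degree c₂) 4 with hsum | hsum
      · -- some child is a leaf
        have hs := sg_neg_one_le (tval G r)
        rcases Nat.lt_or_ge (G.degree c₁) 2 with h1 | h1
        · have := d₁ hD2 (by omega)
          have := b₂ hD2
          omega
        · have h2 : G.degree c₂ = 1 := by omega
          have := d₂ hD2 h2
          have := b₁ hD2
          omega
      · have hsg : 0 ≤ sg (tval G r) := by
          apply sg_nonneg
          rw [htr]
          have : (4:ℤ) ≤ (G.degree c₁ : ℤ) + (G.degree c₂ : ℤ) := by exact_mod_cast hsum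
          omega
        have := b₁ hD2
        have := b₂ hD2
        omega
    · -- k ≥ 3
      have hD3 : 3 ≤ G.degree r := by omega
      have hbound : ∀ c ∈ chl hT r r,
          (1:ℤ) ≤ sg (tval G c) + ∑ w ∈ (sub hT r c) \ {c}, sg (tval G w) :=
        fun c hc => (key_child_root hT hc).1 hD3
      have hsum := Finset.sum_le_sum hbound
      rw [Finset.sum_const] at hsum
      have hs := sg_neg_one_le (tval G r)
      have : (3:ℤ) ≤ ((chl hT r r).card : ℤ) := by exact_mod_cast hk3
      have : ((chl hT r r).card : ℤ) ≤ ∑ c ∈ chl hT r r,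
          (sg (tval G c) + ∑ w ∈ (sub hT r c) \ {c}, sg (tval G w)) := by
        simpa using hsum
      omega

lemma sum_sg_eq (f : V → ℤ) :
    ∑ w : V, sg (f w)
      = ((univ.filter fun w => 0 < f w).card : ℤ)
        - ((univ.filter fun w => f w < 0).card : ℤ) := by
  have h : ∀ w : V, sg (f w)
      = (if 0 < f w then (1:ℤ) else 0) - (if f w < 0 then (1:ℤ) else 0) := by
    intro w; unfold sg; split_ifs <;> omega
  rw [Finset.sum_congr rfl fun w _ => h w, Finset.sum_sub_distrib]
  rw [Finset.sum_boole, Finset.sum_boole]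

end TreeSig


open TreeSig in
/-- For every finite tree, the number of vertices with strictly positive friendship-bias
is at least the number with strictly negative friendship-bias. -/
theorem tree_significant {V : Type*} [Fintype V] (G : SimpleGraph V) (hT : G.IsTree) :
    (Finset.univ.filter fun u : V => bias G u < 0).card ≤
      (Finset.univ.filter fun u : V => 0 < bias G u).card := by
  have : Nonempty V := hT.isConnected.nonempty
  obtain ⟨r⟩ := this
  have htot := total_nonneg hT r
  rw [sum_sg_eq] at htot
  -- bias sign ↔ tval sign
  have hiff : ∀ u : V, (bias G u < 0 ↔ tval G u < 0) ∧ (0 < bias G u ↔ 0 < tval G u) := by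
    intro u
    by_cases hd : G.degree u = 0
    · have hnb : G.neighborFinset u = ∅ := by
        rw [← Finset.card_eq_zero, card_neighborFinset_eq_degree]; exact hd
      have h1 : bias G u = 0 := by rw [bias, if_pos hd]
      have h2 : tval G u = 0 := by rw [tval, hnb, Finset.sum_empty]
      rw [h1, h2]
      simp
    · have hdpos : 0 < (G.degree u : ℝ) := by positivity
      have hb : bias G u
          = (∑ v ∈ G.neighborFinset u, (G.degree v : ℝ)) / (G.degree u) - G.degree u := by
        rw [bias, if_neg hd]
      have hcast : ((tval G u : ℤ) : ℝ)
          = (∑ v ∈ G.neighborFinset u, (G.degree v : ℝ))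
            - (G.degree u : ℝ) * (G.degree u : ℝ) := by
        rw [tval]
        push_cast
        rw [Finset.sum_sub_distrib, Finset.sum_const, card_neighborFinset_eq_degree]
        ring
      constructor
      · rw [hb, sub_neg, div_lt_iff₀ hdpos]
        rw [show (tval G u < 0) ↔ ((tval G u : ℝ) < 0) by exact_mod_cast Iff.rfl]
        rw [hcast]
        constructor <;> intro h <;> nlinarith
      · rw [hb, sub_pos, lt_div_iff₀ hdpos]
        rw [show (0 < tval G u) ↔ ((0:ℝ) < (tval G u : ℝ)) by exact_mod_cast Iff.rfl]
        rw [hcast]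
        constructor <;> intro h <;> nlinarith
  have hneg : (Finset.univ.filter fun u : V => bias G u < 0)
      = (Finset.univ.filter fun u : V => tval G u < 0) := by
    apply Finset.filter_congr
    intro u _
    exact (hiff u).1
  have hpos : (Finset.univ.filter fun u : V => 0 < bias G u)
      = (Finset.univ.filter fun u : V => 0 < tval G u) := by
    apply Finset.filter_congr
    intro u _
    exact (hiff u).2
  rw [hneg, hpos]
  have := htot
  omega
end

section
/- For every finite tree T on n vertices, N⁺ − N⁻ = 0 can occur only if T is a path of length n ≠ 3; in particular, any finite tree that is not a path satisfies N⁺ − N⁻ > 0. -/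
open Finset SimpleGraph
open scoped Classical


section Aux

variable {V : Type*} [Fintype V] {G : SimpleGraph V}

noncomputable def nds (G : SimpleGraph V) (u : V) : ℕ :=
  ∑ v ∈ G.neighborFinset u, G.degree v

lemma cast_nds (u : V) : ((nds G u : ℕ) : ℝ) = ∑ v ∈ G.neighborFinset u, (G.degree v : ℝ) := by
  simp [nds]

lemma bias_pos_iff {u : V} (hd : G.degree u ≠ 0) :
    0 < bias G u ↔ G.degree u * G.degree u < nds G u := by
  have hd' : (0:ℝ) < (G.degree u : ℝ) := by exact_mod_cast Nat.pos_of_ne_zero hd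
  rw [bias, if_neg hd, sub_pos, lt_div_iff₀ hd', ← cast_nds]
  exact_mod_cast Iff.rfl

lemma bias_neg_iff {u : V} (hd : G.degree u ≠ 0) :
    bias G u < 0 ↔ nds G u < G.degree u * G.degree u := by
  have hd' : (0:ℝ) < (G.degree u : ℝ) := by exact_mod_cast Nat.pos_of_ne_zero hd
  rw [bias, if_neg hd, sub_neg, div_lt_iff₀ hd', ← cast_nds]
  exact_mod_cast Iff.rfl

lemma bias_of_deg_zero {u : V} (hd : G.degree u = 0) : bias G u = 0 := by
  rw [bias, if_pos hd]

lemma deg_ne_zero_of_bias_neg {u : V} (h : bias G u < 0) : G.degree u ≠ 0 := by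
  intro hd; rw [bias_of_deg_zero hd] at h; exact lt_irrefl _ h

/-- neighbours of a degree-one vertex are unique -/
lemma eq_of_adj_leaf {l x y : V} (hl : G.degree l = 1) (h1 : G.Adj l x) (h2 : G.Adj l y) :
    x = y := by
  have hc : (G.neighborFinset l).card ≤ 1 := by
    rw [G.card_neighborFinset_eq_degree, hl]
  exact Finset.card_le_one.mp hc x ((G.mem_neighborFinset l x).mpr h1)
    y ((G.mem_neighborFinset l y).mpr h2)

lemma deg_pos_of_adj {x y : V} (h : G.Adj x y) : 1 ≤ G.degree x :=
  (G.degree_pos_iff_exists_adj x).mpr ⟨y, h⟩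

lemma neighborFinset_eq_singleton {l x : V} (hl : G.degree l = 1) (h : G.Adj l x) :
    G.neighborFinset l = {x} := by
  have hc : (G.neighborFinset l).card = 1 := by
    rw [G.card_neighborFinset_eq_degree, hl]
  obtain ⟨a, ha⟩ := Finset.card_eq_one.mp hc
  have hx : x ∈ G.neighborFinset l := (G.mem_neighborFinset l x).mpr h
  rw [ha] at hx ⊢
  rw [Finset.mem_singleton] at hx
  rw [hx]

lemma nds_of_leaf {l x : V} (hl : G.degree l = 1) (h : G.Adj l x) :
    nds G l = G.degree x := by
  rw [nds, neighborFinset_eq_singleton hl h, Finset.sum_singleton]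

lemma exists_adj_of_deg {u : V} (h : G.degree u ≠ 0) : ∃ x, G.Adj u x := by
  exact (G.degree_pos_iff_exists_adj u).mp (Nat.pos_of_ne_zero h)

/-- a degree-2 vertex has exactly two distinct neighbours -/
lemma deg_two_neighbors {u : V} (hu : G.degree u = 2) :
    ∃ x y, x ≠ y ∧ G.neighborFinset u = {x, y} ∧ G.Adj u x ∧ G.Adj u y ∧
      nds G u = G.degree x + G.degree y := by
  have hc : (G.neighborFinset u).card = 2 := by
    rw [G.card_neighborFinset_eq_degree, hu]
  obtain ⟨x, y, hxy, hs⟩ := Finset.card_eq_two.mp hc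
  refine ⟨x, y, hxy, hs, ?_, ?_, ?_⟩
  · rw [← G.mem_neighborFinset, hs]; simp
  · rw [← G.mem_neighborFinset, hs]; simp
  · rw [nds, hs, Finset.sum_pair hxy]

end Aux


section TreeAux

variable {V : Type*} {G : SimpleGraph V}

lemma exists_shortest_path (hc : G.Connected) (x y : V) :
    ∃ p : G.Walk x y, p.IsPath ∧ p.length = G.dist x y := by
  obtain ⟨w, hw⟩ := hc.exists_walk_length_eq_dist x y
  refine ⟨w.bypass, w.bypass_isPath, le_antisymm ?_ ?_⟩
  · calc w.bypass.length ≤ w.length := w.length_bypass_le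
      _ = G.dist x y := hw
  · exact SimpleGraph.dist_le _

/-- in a tree, every path realizes the distance -/
lemma tree_path_length (hT : G.IsTree) {x y : V} (p : G.Walk x y) (hp : p.IsPath) :
    p.length = G.dist x y := by
  obtain ⟨q, hq, hql⟩ := exists_shortest_path hT.isConnected x y
  have := SimpleGraph.isAcyclic_iff_path_unique.mp hT.IsAcyclic ⟨p, hp⟩ ⟨q, hq⟩
  have : p = q := congrArg Subtype.val this
  rw [this, hql]

/-- distances to a fixed vertex along an edge differ by exactly one -/
lemma adj_dist_cases (hT : G.IsTree) (r : V) {a b : V} (h : G.Adj a b) :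
    G.dist a r + 1 = G.dist b r ∨ G.dist b r + 1 = G.dist a r := by
  obtain ⟨p, hp, hpl⟩ := exists_shortest_path hT.isConnected a r
  by_cases hb : b ∈ p.support
  · right
    have h1 : (p.takeUntil b hb).length = G.dist a b := tree_path_length hT _ (hp.takeUntil hb)
    have h2 : (p.dropUntil b hb).length = G.dist b r := tree_path_length hT _ (hp.dropUntil hb)
    have h3 : (p.takeUntil b hb).length + (p.dropUntil b hb).length = p.length := by
      rw [← SimpleGraph.Walk.length_append, p.take_spec hb]
    have hab : G.dist a b = 1 := SimpleGraph.dist_eq_one_iff_adj.mpr h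
    omega
  · left
    have hcons : (SimpleGraph.Walk.cons h.symm p).IsPath := by
      rw [SimpleGraph.Walk.cons_isPath_iff]; exact ⟨hp, hb⟩
    have := tree_path_length hT _ hcons
    simp only [SimpleGraph.Walk.length_cons] at this
    omega

lemma mem_support_dist_le (hT : G.IsTree) {r x y : V} (p : G.Walk y r) (hp : p.IsPath)
    (hx : x ∈ p.support) : G.dist x r ≤ G.dist y r := by
  have h1 : G.dist x r ≤ (p.dropUntil x hx).length := SimpleGraph.dist_le _
  have h2 : (p.takeUntil x hx).length + (p.dropUntil x hx).length = p.length := by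
    rw [← SimpleGraph.Walk.length_append, p.take_spec hx]
  have h3 : p.length = G.dist y r := tree_path_length hT p hp
  omega

/-- unique parent: two neighbours of `c` strictly closer to `r` coincide -/
lemma unique_parent (hT : G.IsTree) (r : V) {a a' c : V} (h1 : G.Adj c a) (h2 : G.Adj c a')
    (d1 : G.dist a r + 1 = G.dist c r) (d2 : G.dist a' r + 1 = G.dist c r) : a = a' := by
  obtain ⟨p, hp, hpl⟩ := exists_shortest_path hT.isConnected a r
  obtain ⟨p', hp', hpl'⟩ := exists_shortest_path hT.isConnected a' r
  have hc : c ∉ p.support := by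
    intro hmem
    have := mem_support_dist_le hT p hp hmem
    omega
  have hc' : c ∉ p'.support := by
    intro hmem
    have := mem_support_dist_le hT p' hp' hmem
    omega
  have hq : (SimpleGraph.Walk.cons h1 p).IsPath := by
    rw [SimpleGraph.Walk.cons_isPath_iff]; exact ⟨hp, hc⟩
  have hq' : (SimpleGraph.Walk.cons h2 p').IsPath := by
    rw [SimpleGraph.Walk.cons_isPath_iff]; exact ⟨hp', hc'⟩
  have heq : (⟨SimpleGraph.Walk.cons h1 p, hq⟩ : G.Path c r) = ⟨SimpleGraph.Walk.cons h2 p', hq'⟩ :=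
    SimpleGraph.isAcyclic_iff_path_unique.mp hT.IsAcyclic _ _
  have heqw : SimpleGraph.Walk.cons h1 p = SimpleGraph.Walk.cons h2 p' := congrArg Subtype.val heq
  have : (SimpleGraph.Walk.cons h1 p).getVert 1 = (SimpleGraph.Walk.cons h2 p').getVert 1 := by
    rw [heqw]
  simpa using this

end TreeAux


section TreeAux2
variable {V : Type*} [Fintype V] {G : SimpleGraph V}

/-- every vertex of a connected graph on ≥ 2 vertices has positive degree -/
lemma deg_pos_of_card (hT : G.IsTree) (h2 : 2 ≤ Fintype.card V) (u : V) : 1 ≤ G.degree u := by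
  obtain ⟨w, hw⟩ := Fintype.exists_ne_of_one_lt_card (by omega) u
  obtain ⟨p⟩ := hT.isConnected.preconnected u w
  cases p with
  | nil => exact absurd rfl hw.symm
  | cons h q => exact (G.degree_pos_iff_exists_adj u).mpr ⟨_, h⟩

/-- if some vertex has degree ≥ 3, the neighbour of a leaf has degree ≥ 2 -/
lemma leaf_nbr_deg (hT : G.IsTree) {r l x : V} (hr : 3 ≤ G.degree r)
    (hl : G.degree l = 1) (h : G.Adj l x) : 2 ≤ G.degree x := by
  by_contra hc
  push_neg at hc
  have hx1 : G.degree x = 1 := by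
    have := (G.degree_pos_iff_exists_adj x).mpr ⟨l, h.symm⟩
    omega
  have hNx : G.neighborFinset x = {l} := by
    have hl' : G.Adj x l := h.symm
    exact (by
      have hc1 : (G.neighborFinset x).card = 1 := by
        rw [G.card_neighborFinset_eq_degree, hx1]
      obtain ⟨a, ha⟩ := Finset.card_eq_one.mp hc1
      have hmem : l ∈ G.neighborFinset x := (G.mem_neighborFinset x l).mpr hl'
      rw [ha] at hmem ⊢
      rw [Finset.mem_singleton] at hmem
      rw [hmem])
  have hNl : G.neighborFinset l = {x} := by
    have hc1 : (G.neighborFinset l).card = 1 := by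
      rw [G.card_neighborFinset_eq_degree, hl]
    obtain ⟨a, ha⟩ := Finset.card_eq_one.mp hc1
    have hmem : x ∈ G.neighborFinset l := (G.mem_neighborFinset l x).mpr h
    rw [ha] at hmem ⊢
    rw [Finset.mem_singleton] at hmem
    rw [hmem]
  -- walk from x to r
  obtain ⟨p⟩ := hT.isConnected.preconnected x r
  have hp := p.bypass_isPath
  set q := p.bypass with hq
  clear_value q
  cases q with
  | nil => omega
  | cons h1 q1 =>
    rename_i v
    have hv : v = l := by
      have hm : v ∈ G.neighborFinset x := (G.mem_neighborFinset x v).mpr h1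
      rw [hNx, Finset.mem_singleton] at hm
      exact hm
    subst hv
    cases q1 with
    | nil => omega
    | cons h2 q2 =>
      rename_i w
      have hw : w = x := by
        have hm : w ∈ G.neighborFinset v := (G.mem_neighborFinset v w).mpr h2
        rw [hNl, Finset.mem_singleton] at hm
        exact hm
      subst hw
      rw [SimpleGraph.Walk.cons_isPath_iff] at hp
      exact hp.2 (by
        rw [SimpleGraph.Walk.support_cons]
        exact List.mem_cons_of_mem _ q2.start_mem_support)
end TreeAux2


section Count
variable {V : Type*} [Fintype V] {G : SimpleGraph V}

def pairSet (G : SimpleGraph V) (P Q : V → Prop) [DecidablePred P] [DecidablePred Q]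
    [DecidableRel G.Adj] : Finset (V × V) :=
  (univ ×ˢ univ).filter fun p : V × V => P p.1 ∧ Q p.2 ∧ G.Adj p.1 p.2

lemma pair_count (P Q : V → Prop) [DecidablePred P] [DecidablePred Q] [DecidableRel G.Adj] :
    (pairSet G P Q).card = ∑ a ∈ univ.filter P, ((G.neighborFinset a).filter Q).card := by
  rw [Finset.card_eq_sum_card_fiberwise (f := Prod.fst) (t := univ.filter P)
    (by intro x hx; simp only [pairSet, Finset.mem_coe, Finset.mem_filter] at hx ⊢; exact ⟨Finset.mem_univ _, hx.2.1⟩)]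
  refine Finset.sum_congr rfl ?_
  intro b hb
  rw [Finset.mem_filter] at hb
  refine Finset.card_bij (fun p _ => p.2) ?_ ?_ ?_
  · intro p hp
    simp only [pairSet, Finset.mem_filter, G.mem_neighborFinset] at hp ⊢
    obtain ⟨⟨_, hP, hQ, hadj⟩, h1⟩ := hp
    exact ⟨by rw [← h1]; exact hadj, hQ⟩
  · intro p hp p' hp'
    simp only [pairSet, Finset.mem_filter] at hp hp'
    intro h2
    exact Prod.ext (hp.2.trans hp'.2.symm) h2
  · intro x hx
    simp only [Finset.mem_filter, G.mem_neighborFinset] at hx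
    refine ⟨(b, x), ?_, rfl⟩
    simp only [pairSet, Finset.mem_filter, Finset.mem_product]
    exact ⟨⟨⟨Finset.mem_univ _, Finset.mem_univ _⟩, hb.2, hx.2, hx.1⟩, trivial⟩

lemma pairSet_swap_card (P Q : V → Prop) [DecidablePred P] [DecidablePred Q]
    [DecidableRel G.Adj] :
    (pairSet G P Q).card = (pairSet G Q P).card := by
  refine Finset.card_bij (fun p _ => p.swap) ?_ ?_ ?_
  · intro p hp
    simp only [pairSet, Finset.mem_filter, Finset.mem_product] at hp ⊢
    exact ⟨⟨Finset.mem_univ _, Finset.mem_univ _⟩, hp.2.2.1, hp.2.1, hp.2.2.2.symm⟩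
  · intro p hp p' hp' h
    exact Prod.swap_injective h
  · intro q hq
    refine ⟨q.swap, ?_, by simp⟩
    simp only [pairSet, Finset.mem_filter, Finset.mem_product] at hq ⊢
    exact ⟨⟨Finset.mem_univ _, Finset.mem_univ _⟩, hq.2.2.1, hq.2.1, hq.2.2.2.symm⟩

lemma count_swap (P Q : V → Prop) [DecidablePred P] [DecidablePred Q] [DecidableRel G.Adj] :
    ∑ a ∈ univ.filter P, ((G.neighborFinset a).filter Q).card
      = ∑ a ∈ univ.filter Q, ((G.neighborFinset a).filter P).card := by
  rw [← pair_count, ← pair_count, pairSet_swap_card]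

end Count


section Key
variable {V : Type*} [Fintype V] (G : SimpleGraph V)

noncomputable def PosS : Finset V := univ.filter fun u => 0 < bias G u
noncomputable def NegS : Finset V := univ.filter fun u => bias G u < 0
noncomputable def LfS : Finset V := univ.filter fun u => G.degree u = 1
noncomputable def BbS : Finset V := univ.filter fun u => 3 ≤ G.degree u
noncomputable def MS : Finset V := univ.filter fun u => G.degree u = 2 ∧ nds G u < 4
noncomputable def P2S : Finset V := univ.filter fun u => G.degree u = 2 ∧ 5 ≤ nds G u
noncomputable def A1S : Finset V :=
  univ.filter fun u => G.degree u = 2 ∧ nds G u = 4 ∧ ∃ x ∈ G.neighborFinset u, G.degree x = 1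
noncomputable def TS : Finset V :=
  univ.filter fun u => G.degree u = 2 ∧ ∀ x ∈ G.neighborFinset u, 3 ≤ G.degree x
noncomputable def AdS : Finset V :=
  univ.filter fun u => G.degree u = 2 ∧ ∃ x ∈ G.neighborFinset u, 3 ≤ G.degree x
noncomputable def Lf2S : Finset V :=
  univ.filter fun u => G.degree u = 1 ∧ ∃ x ∈ G.neighborFinset u, G.degree x = 2
noncomputable def Lf3S : Finset V :=
  univ.filter fun u => G.degree u = 1 ∧ ∃ x ∈ G.neighborFinset u, 3 ≤ G.degree x
noncomputable def US : Finset (V × V) :=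
  pairSet G (fun u => 3 ≤ G.degree u) (fun u => 3 ≤ G.degree u)
noncomputable def W3S (r : V) : Finset (V × V) :=
  (US G).filter fun p => G.dist p.1 r + 1 = G.dist p.2 r

variable {G}

lemma k1 (hT : G.IsTree) {r : V} (hr : 3 ≤ G.degree r) :
    (LfS G).card + (P2S G).card ≤ (PosS G).card := by
  rw [← Finset.card_union_of_disjoint]
  · apply Finset.card_le_card
    intro u hu
    rw [Finset.mem_union, LfS, P2S, Finset.mem_filter, Finset.mem_filter] at hu
    rw [PosS, Finset.mem_filter]
    refine ⟨Finset.mem_univ _, ?_⟩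
    rcases hu with ⟨_, h1⟩ | ⟨_, h2, h5⟩
    · rw [bias_pos_iff (by omega), h1]
      obtain ⟨x, hx⟩ := exists_adj_of_deg (by omega : G.degree u ≠ 0)
      have := leaf_nbr_deg hT hr h1 hx
      have := nds_of_leaf h1 hx
      omega
    · rw [bias_pos_iff (by omega), h2]
      omega
  · rw [Finset.disjoint_left]
    intro u hu hu'
    rw [LfS, Finset.mem_filter] at hu
    rw [P2S, Finset.mem_filter] at hu'
    omega

lemma k2 : (NegS G).card ≤ (MS G).card + (BbS G).card := by
  calc (NegS G).card ≤ ((MS G) ∪ (BbS G)).card := by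
        apply Finset.card_le_card
        intro u hu
        rw [NegS, Finset.mem_filter] at hu
        have hne := deg_ne_zero_of_bias_neg hu.2
        have hlt := (bias_neg_iff hne).mp hu.2
        rw [Finset.mem_union, MS, BbS, Finset.mem_filter, Finset.mem_filter]
        rcases Nat.lt_or_ge (G.degree u) 3 with h3 | h3
        · left
          refine ⟨Finset.mem_univ _, ?_, ?_⟩
          · -- degree is 1 or 2; rule out 1
            rcases Nat.lt_or_ge (G.degree u) 2 with h2 | h2
            · exfalso
              have hu1 : G.degree u = 1 := by omega
              obtain ⟨x, hx⟩ := exists_adj_of_deg hne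
              have := nds_of_leaf hu1 hx
              have := deg_pos_of_adj hx.symm
              rw [hu1] at hlt
              omega
            · omega
          · have hu2 : G.degree u = 2 := by
              rcases Nat.lt_or_ge (G.degree u) 2 with h2 | h2
              · exfalso
                have hu1 : G.degree u = 1 := by omega
                obtain ⟨x, hx⟩ := exists_adj_of_deg hne
                have := nds_of_leaf hu1 hx
                have := deg_pos_of_adj hx.symm
                rw [hu1] at hlt
                omega
              · omega
            rw [hu2] at hlt
            omega
        · right
          exact ⟨Finset.mem_univ _, h3⟩
    _ ≤ (MS G).card + (BbS G).card := Finset.card_union_le _ _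

noncomputable def leafNbr (G : SimpleGraph V) (u : V) : V :=
  if h : ∃ x ∈ G.neighborFinset u, G.degree x = 1 then h.choose else u

lemma leafNbr_spec {G : SimpleGraph V} {u : V} (h : ∃ x ∈ G.neighborFinset u, G.degree x = 1) :
    leafNbr G u ∈ G.neighborFinset u ∧ G.degree (leafNbr G u) = 1 := by
  rw [leafNbr, dif_pos h]
  exact h.choose_spec

lemma k3 (hT : G.IsTree) {r : V} (hr : 3 ≤ G.degree r) :
    (MS G).card + (A1S G).card ≤ (Lf2S G).card := by
  classical
  rw [← Finset.card_union_of_disjoint]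
  · set f : V → V := leafNbr G with hf
    have hex : ∀ u ∈ (MS G) ∪ (A1S G), ∃ x ∈ G.neighborFinset u, G.degree x = 1 := by
      intro u hu
      rw [Finset.mem_union, MS, A1S, Finset.mem_filter, Finset.mem_filter] at hu
      rcases hu with ⟨_, h2, h4⟩ | ⟨_, h2, h4, hex⟩
      · obtain ⟨x, y, hxy, hN, hax, hay, hsum⟩ := deg_two_neighbors h2
        have hx1 : 1 ≤ G.degree x := deg_pos_of_adj hax.symm
        have hy1 : 1 ≤ G.degree y := deg_pos_of_adj hay.symm
        by_cases hx : G.degree x = 1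
        · exact ⟨x, (G.mem_neighborFinset u x).mpr hax, hx⟩
        · exact ⟨y, (G.mem_neighborFinset u y).mpr hay, by omega⟩
      · exact hex
    have hdeg2 : ∀ u ∈ (MS G) ∪ (A1S G), G.degree u = 2 := by
      intro u hu
      rw [Finset.mem_union, MS, A1S, Finset.mem_filter, Finset.mem_filter] at hu
      rcases hu with ⟨_, h2, _⟩ | ⟨_, h2, _⟩ <;> exact h2
    have hfprop : ∀ u ∈ (MS G) ∪ (A1S G), f u ∈ G.neighborFinset u ∧ G.degree (f u) = 1 :=
      fun u hu => leafNbr_spec (hex u hu)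
    apply Finset.card_le_card_of_injOn f
    · intro u hu
      obtain ⟨hmem, hdeg⟩ := hfprop u hu
      rw [Lf2S, Finset.mem_coe, Finset.mem_filter]
      refine ⟨Finset.mem_univ _, hdeg, u, ?_, hdeg2 u hu⟩
      rw [G.mem_neighborFinset]
      exact ((G.mem_neighborFinset u (f u)).mp hmem).symm
    · intro u hu u' hu' heq
      obtain ⟨hmem, hdeg⟩ := hfprop u (by simpa using hu)
      obtain ⟨hmem', hdeg'⟩ := hfprop u' (by simpa using hu')
      apply eq_of_adj_leaf hdeg (((G.mem_neighborFinset u (f u)).mp hmem).symm)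
      rw [heq]
      exact ((G.mem_neighborFinset u' (f u')).mp hmem').symm
  · rw [Finset.disjoint_left]
    intro u hu hu'
    rw [MS, Finset.mem_filter] at hu
    rw [A1S, Finset.mem_filter] at hu'
    omega

lemma k4 : ∑ a ∈ univ.filter (fun u => 3 ≤ G.degree u),
    ((G.neighborFinset a).filter fun x => G.degree x = 1).card ≤ (Lf3S G).card := by
  rw [count_swap]
  calc ∑ a ∈ univ.filter (fun u => G.degree u = 1),
        ((G.neighborFinset a).filter fun x => 3 ≤ G.degree x).card
      ≤ ∑ a ∈ univ.filter (fun u => G.degree u = 1), (if a ∈ Lf3S G then 1 else 0) := by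
        apply Finset.sum_le_sum
        intro l hl
        rw [Finset.mem_filter] at hl
        by_cases hex : ∃ x ∈ G.neighborFinset l, 3 ≤ G.degree x
        · have hmem : l ∈ Lf3S G := by
            rw [Lf3S, Finset.mem_filter]; exact ⟨Finset.mem_univ _, hl.2, hex⟩
          rw [if_pos hmem]
          calc ((G.neighborFinset l).filter fun x => 3 ≤ G.degree x).card
              ≤ (G.neighborFinset l).card := Finset.card_le_card (Finset.filter_subset _ _)
            _ = 1 := by rw [G.card_neighborFinset_eq_degree, hl.2]
        · have : ((G.neighborFinset l).filter fun x => 3 ≤ G.degree x) = ∅ := by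
            rw [Finset.filter_eq_empty_iff]
            push_neg at hex
            intro x hx
            have := hex x hx
            omega
          rw [this]
          simp
    _ ≤ (Lf3S G).card := by
        rw [Finset.sum_ite_mem, Finset.sum_const, smul_eq_mul, mul_one]
        exact Finset.card_le_card Finset.inter_subset_right

lemma k5 : (Lf2S G).card + (Lf3S G).card ≤ (LfS G).card := by
  rw [← Finset.card_union_of_disjoint]
  · apply Finset.card_le_card
    intro u hu
    rw [Finset.mem_union, Lf2S, Lf3S, Finset.mem_filter, Finset.mem_filter] at hu
    rw [LfS, Finset.mem_filter]
    rcases hu with h | h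
    · exact ⟨h.1, h.2.1⟩
    · exact ⟨h.1, h.2.1⟩
  · rw [Finset.disjoint_left]
    intro u hu hu'
    rw [Lf2S, Finset.mem_filter] at hu
    rw [Lf3S, Finset.mem_filter] at hu'
    obtain ⟨_, h1, x, hx, hx2⟩ := hu
    obtain ⟨_, _, y, hy, hy3⟩ := hu'
    rw [G.mem_neighborFinset] at hx hy
    have hxy : x = y := eq_of_adj_leaf h1 hx hy
    rw [hxy] at hx2
    omega

lemma k6 : ∑ a ∈ univ.filter (fun u => 3 ≤ G.degree u),
    ((G.neighborFinset a).filter fun x => G.degree x = 2).card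
      ≤ 2 * (TS G).card + ((AdS G) \ (TS G)).card := by
  rw [count_swap]
  calc ∑ a ∈ univ.filter (fun u => G.degree u = 2),
        ((G.neighborFinset a).filter fun x => 3 ≤ G.degree x).card
      ≤ ∑ a ∈ univ.filter (fun u => G.degree u = 2),
        ((if a ∈ TS G then 2 else 0) + (if a ∈ (AdS G) \ (TS G) then 1 else 0)) := by
        apply Finset.sum_le_sum
        intro v hv
        rw [Finset.mem_filter] at hv
        by_cases hvT : v ∈ TS G
        · rw [if_pos hvT]
          calc ((G.neighborFinset v).filter fun x => 3 ≤ G.degree x).card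
              ≤ (G.neighborFinset v).card := Finset.card_le_card (Finset.filter_subset _ _)
            _ = 2 := by rw [G.card_neighborFinset_eq_degree, hv.2]
            _ ≤ _ := by omega
        · rw [if_neg hvT]
          by_cases hAd : ∃ x ∈ G.neighborFinset v, 3 ≤ G.degree x
          · have hvAd : v ∈ (AdS G) \ (TS G) := by
              rw [Finset.mem_sdiff, AdS, Finset.mem_filter]
              exact ⟨⟨Finset.mem_univ _, hv.2, hAd⟩, hvT⟩
            rw [if_pos hvAd]
            have hnall : ∃ x ∈ G.neighborFinset v, G.degree x < 3 := by
              by_contra hc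
              push_neg at hc
              apply hvT
              rw [TS, Finset.mem_filter]
              exact ⟨Finset.mem_univ _, hv.2, fun x hx => hc x hx⟩
            obtain ⟨x, hx, hx3⟩ := hnall
            have hb : ((G.neighborFinset v).filter fun z => 3 ≤ G.degree z).card ≤ 1 := by
              calc ((G.neighborFinset v).filter fun z => 3 ≤ G.degree z).card
                  ≤ ((G.neighborFinset v).erase x).card := by
                    apply Finset.card_le_card
                    intro z hz
                    rw [Finset.mem_filter] at hz
                    refine Finset.mem_erase.mpr ⟨?_, hz.1⟩
                    intro hzx
                    rw [hzx] at hz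
                    omega
                _ = 1 := by
                    rw [Finset.card_erase_of_mem hx, G.card_neighborFinset_eq_degree, hv.2]
            omega
          · have hemp : ((G.neighborFinset v).filter fun x => 3 ≤ G.degree x) = ∅ := by
              rw [Finset.filter_eq_empty_iff]
              push_neg at hAd
              intro x hx
              have := hAd x hx
              omega
            rw [hemp]
            simp
    _ = 2 * (TS G).card + ((AdS G) \ (TS G)).card := by
        rw [Finset.sum_add_distrib]
        have hTsub : TS G ⊆ univ.filter (fun u => G.degree u = 2) := by
          intro u hu
          rw [TS, Finset.mem_filter] at hu
          rw [Finset.mem_filter]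
          exact ⟨Finset.mem_univ _, hu.2.1⟩
        have hAdsub : (AdS G) \ (TS G) ⊆ univ.filter (fun u => G.degree u = 2) := by
          intro u hu
          rw [Finset.mem_sdiff, AdS, Finset.mem_filter] at hu
          rw [Finset.mem_filter]
          exact ⟨Finset.mem_univ _, hu.1.2.1⟩
        rw [Finset.sum_ite_mem, Finset.sum_ite_mem,
          Finset.inter_eq_right.mpr hTsub, Finset.inter_eq_right.mpr hAdsub,
          Finset.sum_const, Finset.sum_const]
        simp [mul_comm]

lemma USpair : US G = pairSet G (fun u => 3 ≤ G.degree u) (fun u => 3 ≤ G.degree u) := rfl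

lemma k7 : TS G ⊆ AdS G := by
  intro u hu
  rw [TS, Finset.mem_filter] at hu
  rw [AdS, Finset.mem_filter]
  obtain ⟨_, h2, hall⟩ := hu
  have hne : (G.neighborFinset u).Nonempty := by
    rw [← Finset.card_pos, G.card_neighborFinset_eq_degree, h2]; omega
  obtain ⟨x, hx⟩ := hne
  exact ⟨Finset.mem_univ _, h2, x, hx, hall x hx⟩

lemma k8 : (AdS G).card ≤ (P2S G).card + (A1S G).card := by
  calc (AdS G).card ≤ ((P2S G) ∪ (A1S G)).card := by
        apply Finset.card_le_card
        intro u hu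
        rw [AdS, Finset.mem_filter] at hu
        obtain ⟨_, h2, b, hb, hb3⟩ := hu
        obtain ⟨x, y, hxy, hN, hax, hay, hsum⟩ := deg_two_neighbors h2
        have hbxy : b = x ∨ b = y := by
          rw [hN, Finset.mem_insert, Finset.mem_singleton] at hb
          exact hb
        have hx1 : 1 ≤ G.degree x := deg_pos_of_adj hax.symm
        have hy1 : 1 ≤ G.degree y := deg_pos_of_adj hay.symm
        rw [Finset.mem_union, P2S, A1S, Finset.mem_filter, Finset.mem_filter]
        rcases Nat.lt_or_ge (nds G u) 5 with h5 | h5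
        · right
          rcases hbxy with rfl | rfl
          · exact ⟨Finset.mem_univ _, h2, by omega, y, by rw [hN]; simp, by omega⟩
          · exact ⟨Finset.mem_univ _, h2, by omega, x, by rw [hN]; simp, by omega⟩
        · left; exact ⟨Finset.mem_univ _, h2, h5⟩
    _ ≤ (P2S G).card + (A1S G).card := Finset.card_union_le _ _

lemma k9 : ∑ b ∈ univ.filter (fun u => 3 ≤ G.degree u), G.degree b
    = (∑ a ∈ univ.filter (fun u => 3 ≤ G.degree u),
        ((G.neighborFinset a).filter fun x => G.degree x = 1).card)
      + (∑ a ∈ univ.filter (fun u => 3 ≤ G.degree u),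
        ((G.neighborFinset a).filter fun x => G.degree x = 2).card)
      + (∑ a ∈ univ.filter (fun u => 3 ≤ G.degree u),
        ((G.neighborFinset a).filter fun x => 3 ≤ G.degree x).card) := by
  rw [← Finset.sum_add_distrib, ← Finset.sum_add_distrib]
  apply Finset.sum_congr rfl
  intro a _
  have h1 : ((G.neighborFinset a).filter fun x => G.degree x = 1).card
      + ((G.neighborFinset a).filter fun x => ¬ G.degree x = 1).card
      = (G.neighborFinset a).card :=
    Finset.card_filter_add_card_filter_not _
  have h2 : (((G.neighborFinset a).filter fun x => ¬ G.degree x = 1).filter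
        fun x => G.degree x = 2).card
      + (((G.neighborFinset a).filter fun x => ¬ G.degree x = 1).filter
        fun x => ¬ G.degree x = 2).card
      = ((G.neighborFinset a).filter fun x => ¬ G.degree x = 1).card :=
    Finset.card_filter_add_card_filter_not _
  have e2 : ((G.neighborFinset a).filter fun x => ¬ G.degree x = 1).filter
        (fun x => G.degree x = 2)
      = (G.neighborFinset a).filter fun x => G.degree x = 2 := by
    rw [Finset.filter_filter]
    apply Finset.filter_congr
    intro x _
    constructor
    · exact fun h => h.2
    · exact fun h => ⟨by omega, h⟩
  have e3 : ((G.neighborFinset a).filter fun x => ¬ G.degree x = 1).filter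
        (fun x => ¬ G.degree x = 2)
      = (G.neighborFinset a).filter fun x => 3 ≤ G.degree x := by
    rw [Finset.filter_filter]
    apply Finset.filter_congr
    intro x hx
    rw [G.mem_neighborFinset] at hx
    have := deg_pos_of_adj hx.symm
    constructor
    · intro h; omega
    · intro h; omega
  rw [e2, e3] at h2
  rw [G.card_neighborFinset_eq_degree] at h1
  omega

lemma k10 (hT : G.IsTree) (r : V) : ∑ a ∈ univ.filter (fun u => 3 ≤ G.degree u),
    ((G.neighborFinset a).filter fun x => 3 ≤ G.degree x).card = 2 * (W3S G r).card := by
  rw [← pair_count, ← USpair]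
  have hsplit : (W3S G r).card
      + ((US G).filter (fun p => ¬ (G.dist p.1 r + 1 = G.dist p.2 r))).card = (US G).card := by
    rw [W3S]
    exact Finset.card_filter_add_card_filter_not _
  have hswap : ((US G).filter (fun p => ¬ (G.dist p.1 r + 1 = G.dist p.2 r))).card
      = (W3S G r).card := by
    refine Finset.card_bij (fun p _ => p.swap) ?_ ?_ ?_
    · intro p hp
      rw [Finset.mem_filter] at hp
      obtain ⟨hpU, hpc⟩ := hp
      rw [USpair, pairSet, Finset.mem_filter] at hpU
      obtain ⟨-, h1, h2, hadj⟩ := hpU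
      have hcase := adj_dist_cases hT r hadj
      refine Finset.mem_filter.mpr ⟨Finset.mem_filter.mpr ⟨?_, ?_⟩, ?_⟩
      · simp [Finset.mem_product]
      · exact ⟨h2, h1, hadj.symm⟩
      · simp only [Prod.fst_swap, Prod.snd_swap]
        omega
    · intro p hp p' hp' h
      exact Prod.swap_injective h
    · intro q hq
      refine ⟨q.swap, ?_, by simp⟩
      rw [W3S, Finset.mem_filter, USpair, pairSet, Finset.mem_filter] at hq
      obtain ⟨⟨-, h1, h2, hadj⟩, hc⟩ := hq
      refine Finset.mem_filter.mpr ⟨Finset.mem_filter.mpr ⟨?_, ?_⟩, ?_⟩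
      · simp [Finset.mem_product]
      · exact ⟨h2, h1, hadj.symm⟩
      · simp only [Prod.fst_swap, Prod.snd_swap]
        omega
  omega

lemma k11 : 3 * (BbS G).card ≤ ∑ b ∈ univ.filter (fun u => 3 ≤ G.degree u), G.degree b := by
  have : (BbS G) = univ.filter (fun u => 3 ≤ G.degree u) := rfl
  rw [this, mul_comm]
  calc (univ.filter (fun u => 3 ≤ G.degree u)).card * 3
      = ∑ _b ∈ univ.filter (fun u => 3 ≤ G.degree u), 3 := by rw [Finset.sum_const, smul_eq_mul]
    _ ≤ _ := by
        apply Finset.sum_le_sum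
        intro b hb
        exact (Finset.mem_filter.mp hb).2

noncomputable def upNbr (G : SimpleGraph V) (r v : V) : V :=
  if h : ∃ x ∈ G.neighborFinset v, G.dist v r + 1 = G.dist x r then h.choose else v

lemma upNbr_spec {G : SimpleGraph V} {r v : V}
    (h : ∃ x ∈ G.neighborFinset v, G.dist v r + 1 = G.dist x r) :
    upNbr G r v ∈ G.neighborFinset v ∧ G.dist v r + 1 = G.dist (upNbr G r v) r := by
  rw [upNbr, dif_pos h]
  exact h.choose_spec

lemma TS_up (hT : G.IsTree) {r : V} (hr : 3 ≤ G.degree r) {v : V} (hv : v ∈ TS G) :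
    ∃ x ∈ G.neighborFinset v, G.dist v r + 1 = G.dist x r := by
  rw [TS, Finset.mem_filter] at hv
  obtain ⟨-, h2, hall⟩ := hv
  obtain ⟨x, y, hxy, hN, hax, hay, -⟩ := deg_two_neighbors h2
  rcases adj_dist_cases hT r hax with hx | hx
  · exact ⟨x, (G.mem_neighborFinset v x).mpr hax, hx⟩
  · rcases adj_dist_cases hT r hay with hy | hy
    · exact ⟨y, (G.mem_neighborFinset v y).mpr hay, hy⟩
    · exact absurd (unique_parent hT r hax hay hx hy) hxy

lemma k12 (hT : G.IsTree) {r : V} (hr : 3 ≤ G.degree r) :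
    (W3S G r).card + (TS G).card + 1 ≤ (BbS G).card := by
  classical
  have hrB : r ∈ BbS G := by rw [BbS, Finset.mem_filter]; exact ⟨Finset.mem_univ _, hr⟩
  -- images
  have hW3mem : ∀ p ∈ W3S G r, G.Adj p.1 p.2 ∧ 3 ≤ G.degree p.1 ∧ 3 ≤ G.degree p.2 ∧
      G.dist p.1 r + 1 = G.dist p.2 r := by
    intro p hp
    rw [W3S, Finset.mem_filter, USpair, pairSet, Finset.mem_filter] at hp
    exact ⟨hp.1.2.2.2, hp.1.2.1, hp.1.2.2.1, hp.2⟩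
  have himg1 : (W3S G r).image Prod.snd ⊆ (BbS G).erase r := by
    intro c hc
    rw [Finset.mem_image] at hc
    obtain ⟨p, hp, rfl⟩ := hc
    obtain ⟨hadj, h1, h2, hd⟩ := hW3mem p hp
    refine Finset.mem_erase.mpr ⟨?_, by rw [BbS, Finset.mem_filter]; exact ⟨Finset.mem_univ _, h2⟩⟩
    intro hpr
    rw [hpr] at hd
    rw [SimpleGraph.dist_self] at hd
    omega
  have himg2 : (TS G).image (upNbr G r) ⊆ (BbS G).erase r := by
    intro c hc
    rw [Finset.mem_image] at hc
    obtain ⟨v, hv, rfl⟩ := hc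
    obtain ⟨hmem, hd⟩ := upNbr_spec (TS_up hT hr hv)
    rw [TS, Finset.mem_filter] at hv
    have h3 : 3 ≤ G.degree (upNbr G r v) := hv.2.2 _ hmem
    refine Finset.mem_erase.mpr ⟨?_, by rw [BbS, Finset.mem_filter]; exact ⟨Finset.mem_univ _, h3⟩⟩
    intro hur
    rw [hur, SimpleGraph.dist_self] at hd
    omega
  have hinj1 : Set.InjOn Prod.snd ((W3S G r) : Set (V × V)) := by
    intro p hp p' hp' h
    obtain ⟨hadj, h1, h2, hd⟩ := hW3mem p (by simpa using hp)
    obtain ⟨hadj', h1', h2', hd'⟩ := hW3mem p' (by simpa using hp')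
    have : p.1 = p'.1 := by
      apply unique_parent hT r (c := p.2) hadj.symm
      · rw [h]; exact hadj'.symm
      · exact hd
      · rw [h]; exact hd'
    exact Prod.ext this h
  have hinj2 : Set.InjOn (upNbr G r) ((TS G) : Set V) := by
    intro v hv v' hv' h
    obtain ⟨hmem, hd⟩ := upNbr_spec (TS_up hT hr (by simpa using hv))
    obtain ⟨hmem', hd'⟩ := upNbr_spec (TS_up hT hr (by simpa using hv'))
    rw [G.mem_neighborFinset] at hmem hmem'
    apply unique_parent hT r (c := upNbr G r v) hmem.symm
    · rw [h]; exact hmem'.symm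
    · exact hd
    · rw [h]; exact hd'
  have hdisj : Disjoint ((W3S G r).image Prod.snd) ((TS G).image (upNbr G r)) := by
    rw [Finset.disjoint_left]
    intro c hc hc'
    rw [Finset.mem_image] at hc hc'
    obtain ⟨p, hp, rfl⟩ := hc
    obtain ⟨v, hv, hvc⟩ := hc'
    obtain ⟨hadj, h1, h2, hd⟩ := hW3mem p hp
    obtain ⟨hmem, hdv⟩ := upNbr_spec (TS_up hT hr hv)
    rw [G.mem_neighborFinset] at hmem
    rw [hvc] at hmem hdv
    have : p.1 = v := by
      apply unique_parent hT r (c := p.2) hadj.symm hmem.symm hd hdv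
    rw [TS, Finset.mem_filter] at hv
    rw [this] at h1
    omega
  have hcard1 : ((W3S G r).image Prod.snd).card = (W3S G r).card :=
    Finset.card_image_of_injOn hinj1
  have hcard2 : ((TS G).image (upNbr G r)).card = (TS G).card :=
    Finset.card_image_of_injOn hinj2
  have hle : ((W3S G r).image Prod.snd).card + ((TS G).image (upNbr G r)).card
      ≤ ((BbS G).erase r).card := by
    rw [← Finset.card_union_of_disjoint hdisj]
    exact Finset.card_le_card (Finset.union_subset himg1 himg2)
  have hbe : ((BbS G).erase r).card = (BbS G).card - 1 := Finset.card_erase_of_mem hrB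
  have hbpos : 1 ≤ (BbS G).card := Finset.card_pos.mpr ⟨r, hrB⟩
  omega

lemma key (hT : G.IsTree) {r : V} (hr : 3 ≤ G.degree r) :
    (univ.filter fun u : V => bias G u < 0).card < (univ.filter fun u : V => 0 < bias G u).card := by
  have h1 := k1 hT hr
  have h2 := k2 (G := G)
  have h3 := k3 hT hr
  have h4 := k4 (G := G)
  have h5 := k5 (G := G)
  have h6 := k6 (G := G)
  have h7 := Finset.card_sdiff_add_card_eq_card (k7 (G := G))
  have h8 := k8 (G := G)
  have h9 := k9 (G := G)
  have h10 := k10 hT r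
  have h11 := k11 (G := G)
  have h12 := k12 hT hr
  have hpos : (PosS G) = univ.filter fun u : V => 0 < bias G u := rfl
  have hneg : (NegS G) = univ.filter fun u : V => bias G u < 0 := rfl
  rw [← hpos, ← hneg]
  omega

end Key

section Three
variable {V : Type*} [Fintype V] {G : SimpleGraph V}

lemma deg_le_two_of_card_three (h3 : Fintype.card V = 3) (u : V) : G.degree u ≤ 2 := by
  by_contra hc
  push_neg at hc
  have hsub : G.neighborFinset u ⊆ univ.erase u := by
    intro x hx
    rw [G.mem_neighborFinset] at hx
    exact Finset.mem_erase.mpr ⟨hx.ne', Finset.mem_univ _⟩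
  have := Finset.card_le_card hsub
  rw [G.card_neighborFinset_eq_degree, Finset.card_erase_of_mem (Finset.mem_univ _),
    Finset.card_univ, h3] at this
  omega

lemma sum_deg_three (hT : G.IsTree) (h3 : Fintype.card V = 3) :
    ∑ v : V, G.degree v = 4 := by
  classical
  have he := hT.card_edgeFinset
  rw [h3] at he
  rw [G.sum_degrees_eq_twice_card_edges]
  omega

lemma univ_eq_three {u x y : V} (h3 : Fintype.card V = 3) (hux : u ≠ x) (huy : u ≠ y)
    (hxy : x ≠ y) : (univ : Finset V) = {u, x, y} := by
  have hc : ({u, x, y} : Finset V).card = 3 := by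
    rw [Finset.card_insert_of_notMem (by simp [hux, huy]),
      Finset.card_insert_of_notMem (by simp [hxy]), Finset.card_singleton]
  exact (Finset.eq_of_subset_of_card_le (Finset.subset_univ _)
    (by rw [Finset.card_univ, h3, hc])).symm

lemma sum_three {u x y : V} (h3 : Fintype.card V = 3) (hux : u ≠ x) (huy : u ≠ y)
    (hxy : x ≠ y) (f : V → ℕ) : ∑ v : V, f v = f u + f x + f y := by
  rw [univ_eq_three h3 hux huy hxy, Finset.sum_insert (by simp [hux, huy]),
    Finset.sum_insert (by simp [hxy]), Finset.sum_singleton]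
  ring

lemma claimA (hT : G.IsTree) (h3 : Fintype.card V = 3) {u : V} (hu : G.degree u = 2) :
    bias G u < 0 := by
  obtain ⟨x, y, hxy, hN, hax, hay, hsum⟩ := deg_two_neighbors hu
  have hux : u ≠ x := hax.ne
  have huy : u ≠ y := hay.ne
  have h4 := sum_deg_three hT h3
  rw [sum_three h3 hux huy hxy] at h4
  have hx1 : 1 ≤ G.degree x := deg_pos_of_adj hax.symm
  have hy1 : 1 ≤ G.degree y := deg_pos_of_adj hay.symm
  rw [bias_neg_iff (by omega), hu]
  omega

lemma claimB (hT : G.IsTree) (h3 : Fintype.card V = 3) {u : V} (hu : G.degree u = 1) :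
    0 < bias G u := by
  obtain ⟨x, hx⟩ := exists_adj_of_deg (by omega : G.degree u ≠ 0)
  have hux : u ≠ x := hx.ne
  have hnds := nds_of_leaf hu hx
  have hxle : G.degree x ≤ 2 := deg_le_two_of_card_three h3 x
  have hx2 : G.degree x = 2 := by
    rcases Nat.lt_or_ge (G.degree x) 2 with h | h
    · exfalso
      have hx1 : G.degree x = 1 := by
        have := deg_pos_of_adj hx.symm
        omega
      -- find third vertex z
      have hcard2 : ({u, x} : Finset V).card = 2 := by
        rw [Finset.card_insert_of_notMem (by simp [hux]), Finset.card_singleton]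
      have hne : (univ \ ({u, x} : Finset V)).Nonempty := by
        rw [← Finset.card_pos, Finset.card_sdiff_of_subset (Finset.subset_univ _), Finset.card_univ, h3,
          hcard2]
        omega
      obtain ⟨z, hz⟩ := hne
      rw [Finset.mem_sdiff, Finset.mem_insert, Finset.mem_singleton] at hz
      have hzu : z ≠ u := fun h => hz.2 (Or.inl h)
      have hzx : z ≠ x := fun h => hz.2 (Or.inr h)
      have h4 := sum_deg_three hT h3
      rw [sum_three h3 hux (Ne.symm hzu) (Ne.symm hzx)] at h4
      have hz2 : G.degree z = 2 := by omega
      have hNz : G.neighborFinset z = univ.erase z := by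
        apply Finset.eq_of_subset_of_card_le
        · intro w hw
          rw [G.mem_neighborFinset] at hw
          exact Finset.mem_erase.mpr ⟨hw.ne', Finset.mem_univ _⟩
        · rw [G.card_neighborFinset_eq_degree, hz2,
            Finset.card_erase_of_mem (Finset.mem_univ _), Finset.card_univ, h3]
      have hzadj : G.Adj z u := by
        rw [← G.mem_neighborFinset, hNz]
        exact Finset.mem_erase.mpr ⟨Ne.symm hzu, Finset.mem_univ _⟩
      have : z ∈ G.neighborFinset u := (G.mem_neighborFinset u z).mpr hzadj.symm
      rw [neighborFinset_eq_singleton hu hx, Finset.mem_singleton] at this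
      exact hzx this
    · omega
  rw [bias_pos_iff (by omega), hu]
  omega

lemma three_case (hT : G.IsTree) (h3 : Fintype.card V = 3) :
    (univ.filter fun u : V => 0 < bias G u).card ≠ (univ.filter fun u : V => bias G u < 0).card := by
  have hge : ∀ u : V, 1 ≤ G.degree u := deg_pos_of_card hT (by omega)
  have hle : ∀ u : V, G.degree u ≤ 2 := deg_le_two_of_card_three h3
  have hPos : (univ.filter fun u : V => 0 < bias G u) = univ.filter fun u => G.degree u = 1 := by
    apply Finset.filter_congr
    intro u _
    constructor
    · intro h
      rcases Nat.lt_or_ge (G.degree u) 2 with h2 | h2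
      · have := hge u; omega
      · exfalso
        have hu2 : G.degree u = 2 := by have := hle u; omega
        exact absurd h (lt_asymm (claimA hT h3 hu2))
    · intro h
      exact claimB hT h3 h
  have hNeg : (univ.filter fun u : V => bias G u < 0) = univ.filter fun u => G.degree u = 2 := by
    apply Finset.filter_congr
    intro u _
    constructor
    · intro h
      rcases Nat.lt_or_ge (G.degree u) 2 with h2 | h2
      · exfalso
        have hu1 : G.degree u = 1 := by have := hge u; omega
        exact absurd h (lt_asymm (claimB hT h3 hu1))
      · have := hle u; omega
    · intro h
      exact claimA hT h3 h
  have hpart : (univ.filter fun u : V => G.degree u = 1).card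
      + (univ.filter fun u : V => G.degree u = 2).card = 3 := by
    have := Finset.card_filter_add_card_filter_not (s := (univ : Finset V))
      (fun u : V => G.degree u = 1)
    have hcongr : (univ.filter fun u : V => ¬ G.degree u = 1)
        = univ.filter fun u : V => G.degree u = 2 := by
      apply Finset.filter_congr
      intro u _
      have := hge u; have := hle u
      constructor
      · intro h; omega
      · intro h; omega
    rw [hcongr] at this
    rw [this, Finset.card_univ, h3]
  have hsum : (univ.filter fun u : V => G.degree u = 1).card
      + 2 * (univ.filter fun u : V => G.degree u = 2).card = 4 := by
    have h4 := sum_deg_three hT h3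
    have hsplit := Finset.sum_filter_add_sum_filter_not (univ : Finset V)
      (fun u : V => G.degree u = 1) (fun u => G.degree u)
    have hcongr : (univ.filter fun u : V => ¬ G.degree u = 1)
        = univ.filter fun u : V => G.degree u = 2 := by
      apply Finset.filter_congr
      intro u _
      have := hge u; have := hle u
      constructor
      · intro h; omega
      · intro h; omega
    rw [hcongr] at hsplit
    have h1 : ∑ u ∈ univ.filter (fun u : V => G.degree u = 1), G.degree u
        = (univ.filter fun u : V => G.degree u = 1).card := by
      rw [Finset.sum_congr rfl (fun u hu => (Finset.mem_filter.mp hu).2), Finset.sum_const,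
        smul_eq_mul, mul_one]
    have h2 : ∑ u ∈ univ.filter (fun u : V => G.degree u = 2), G.degree u
        = 2 * (univ.filter fun u : V => G.degree u = 2).card := by
      rw [Finset.sum_congr rfl (fun u hu => (Finset.mem_filter.mp hu).2), Finset.sum_const,
        smul_eq_mul, mul_comm]
    rw [h1, h2, h4] at hsplit
    omega
  rw [hPos, hNeg]
  omega

end Three

/-- For a finite tree, `N⁺ - N⁻ = 0` can occur only if the tree is a path on `n ≠ 3`
vertices; in particular, any finite tree that is not a path satisfies `N⁺ - N⁻ > 0`. -/
theorem tree_equality_only_for_paths {V : Type*} [Fintype V] (G : SimpleGraph V)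
    (hT : G.IsTree) :
    ((Finset.univ.filter fun u : V => 0 < bias G u).card =
        (Finset.univ.filter fun u : V => bias G u < 0).card →
      (∀ u : V, G.degree u ≤ 2) ∧ Fintype.card V ≠ 3) ∧
    (¬ (∀ u : V, G.degree u ≤ 2) →
      (Finset.univ.filter fun u : V => bias G u < 0).card <
        (Finset.univ.filter fun u : V => 0 < bias G u).card) := by
  have main2 : ¬ (∀ u : V, G.degree u ≤ 2) →
      (Finset.univ.filter fun u : V => bias G u < 0).card <
        (Finset.univ.filter fun u : V => 0 < bias G u).card := by
    intro h
    push_neg at h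
    obtain ⟨r, hr⟩ := h
    exact key hT (r := r) (by omega)
  refine ⟨?_, main2⟩
  intro heq
  have ha : ∀ u : V, G.degree u ≤ 2 := by
    by_contra hc
    have := main2 hc
    omega
  refine ⟨ha, ?_⟩
  intro h3
  exact three_case hT h3 heq
end

section
/- Let p be an offspring distribution supported on {1, a} with p_1 = q ∈ (0,1), p_a = 1 − q for a ≥ 2, mean μ = q + a(1−q), and size-biased distribution p̃_k = k p_k/μ. For the vertex-type densities f^χ = ∑_k p_k · P(sign[X̃ + S_k − k(k+1)] = χ) with S_k a sum of k i.i.d. p-variables and X̃ ∼ p̃ independent, one has f⁺ = q − q³/μ, f⁰ = (q³ + a(1−q)^{a+2})/μ, and f⁻ = (1−q) − a(1−q)^{a+2}/μ. -/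
/-!
Since `p` lives on `{1, a}`, only `k = 1` and `k = a` contribute to `f^χ`. For `k = 1` the sum
`X̃ + S_1` is at least `2 = k(k+1)`, with equality exactly when `X̃ = X_1 = 1`, of probability
`(q/μ) q`. For `k = a` the sum `X̃ + S_a` is at most `a + a² = k(k+1)`, with equality exactly when
`X̃ = a` and all `X_i = a`, of probability `(a(1-q)/μ) (1-q)^a`. So each `k` contributes only to
`χ = 0` and to one strict sign, and the three densities follow.
-/

open scoped ENNReal

/-- Law of `S_k = X_1 + ⋯ + X_k`, a sum of `k` i.i.d. random variables with law `p`. -/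
noncomputable def Spmf (p : PMF ℕ) : ℕ → PMF ℕ
  | 0 => PMF.pure 0
  | k + 1 => (Spmf p k).bind fun s => p.map fun x => s + x

/-- Probability that a random variable with law `q` lies in the set `A`. -/
noncomputable def prob (q : PMF ℕ) (A : Set ℕ) : ℝ≥0∞ := ∑' n, A.indicator q n

/-- Vertex-type density `f^χ = ∑_k p_k P(sign[X̃ + S_k - k(k+1)] = χ)`, where `X̃` has the
size-biased law `p̃` and is independent of `S_k`. -/
noncomputable def fchi (p ptilde : PMF ℕ) (χ : SignType) : ℝ≥0∞ :=
  ∑' k : ℕ, p k *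
    prob (ptilde.bind fun xt => (Spmf p k).map fun s => xt + s)
      {m : ℕ | SignType.sign ((m : ℤ) - k * (k + 1)) = χ}

noncomputable def addConv (P Q : PMF ℕ) : PMF ℕ :=
  P.bind fun x => Q.map fun y => x + y

section addConv

variable {P Q : PMF ℕ}

theorem mem_support_addConv_iff {m : ℕ} :
    m ∈ (addConv P Q).support ↔ ∃ x ∈ P.support, ∃ y ∈ Q.support, x + y = m := by
  simp only [addConv, PMF.mem_support_bind_iff, PMF.mem_support_map_iff]

theorem add_le_of_mem_support_addConv {b c : ℕ} (hP : ∀ x ∈ P.support, b ≤ x)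
    (hQ : ∀ y ∈ Q.support, c ≤ y) : ∀ m ∈ (addConv P Q).support, b + c ≤ m := by
  intro m hm
  obtain ⟨x, hx, y, hy, rfl⟩ := mem_support_addConv_iff.1 hm
  exact Nat.add_le_add (hP x hx) (hQ y hy)

theorem le_add_of_mem_support_addConv {b c : ℕ} (hP : ∀ x ∈ P.support, x ≤ b)
    (hQ : ∀ y ∈ Q.support, y ≤ c) : ∀ m ∈ (addConv P Q).support, m ≤ b + c := by
  intro m hm
  obtain ⟨x, hx, y, hy, rfl⟩ := mem_support_addConv_iff.1 hm
  exact Nat.add_le_add (hP x hx) (hQ y hy)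

theorem addConv_apply_add_of_unique {b c : ℕ}
    (h : ∀ x ∈ P.support, ∀ y ∈ Q.support, x + y = b + c → x = b ∧ y = c) :
    addConv P Q (b + c) = P b * Q c := by
  have hoff : ∀ x, x ≠ b → P x * Q.map (fun y => x + y) (b + c) = 0 := by
    intro x hx
    by_contra hne
    obtain ⟨hPx, hmap⟩ := mul_ne_zero_iff.1 hne
    obtain ⟨y, hy, hxy⟩ := (PMF.mem_support_map_iff _ _ _).1 ((PMF.mem_support_iff _ _).2 hmap)
    exact hx (h x ((PMF.mem_support_iff _ _).2 hPx) y hy hxy).1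
  rw [addConv, PMF.bind_apply, tsum_eq_single b hoff, PMF.map_apply, tsum_eq_single c]
  · simp
  · intro y hy
    exact if_neg (by omega)

theorem addConv_apply_add_of_le_support {b c : ℕ} (hP : ∀ x ∈ P.support, b ≤ x)
    (hQ : ∀ y ∈ Q.support, c ≤ y) : addConv P Q (b + c) = P b * Q c :=
  addConv_apply_add_of_unique fun x hx y hy _ => by
    have := hP x hx
    have := hQ y hy
    omega

theorem addConv_apply_add_of_support_le {b c : ℕ} (hP : ∀ x ∈ P.support, x ≤ b)
    (hQ : ∀ y ∈ Q.support, y ≤ c) : addConv P Q (b + c) = P b * Q c :=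
  addConv_apply_add_of_unique fun x hx y hy _ => by
    have := hP x hx
    have := hQ y hy
    omega

end addConv

section Spmf

variable {p : PMF ℕ} {a : ℕ}

theorem Spmf_succ (p : PMF ℕ) (k : ℕ) : Spmf p (k + 1) = addConv (Spmf p k) p := rfl

theorem Spmf_one (p : PMF ℕ) : Spmf p 1 = p := by
  rw [Spmf_succ, Spmf, addConv, PMF.pure_bind]
  simp only [zero_add]
  exact PMF.map_id p

theorem le_mul_of_mem_support_Spmf (hp : ∀ x ∈ p.support, x ≤ a) :
    ∀ k, ∀ s ∈ (Spmf p k).support, s ≤ k * a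
  | 0, s, hs => by simp_all [Spmf]
  | k + 1, s, hs => by
    rw [add_one_mul]
    exact le_add_of_mem_support_addConv (le_mul_of_mem_support_Spmf hp k) hp s hs

theorem Spmf_apply_mul (hp : ∀ x ∈ p.support, x ≤ a) : ∀ k, Spmf p k (k * a) = p a ^ k
  | 0 => by simp [Spmf]
  | k + 1 => by
    rw [Spmf_succ, add_one_mul,
      addConv_apply_add_of_support_le (le_mul_of_mem_support_Spmf hp k) hp,
      Spmf_apply_mul hp k, pow_succ]

end Spmf

section prob

variable (Q : PMF ℕ)

theorem prob_eq_toOuterMeasure (A : Set ℕ) : prob Q A = Q.toOuterMeasure A :=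
  (Q.toOuterMeasure_apply A).symm

theorem prob_singleton (N : ℕ) : prob Q {N} = Q N := by
  rw [prob_eq_toOuterMeasure, PMF.toOuterMeasure_apply_singleton]

theorem prob_compl_singleton (N : ℕ) : prob Q {N}ᶜ = 1 - Q N := by
  refine ENNReal.eq_sub_of_add_eq (Q.apply_ne_top N) ?_
  rw [← prob_singleton, prob, prob, ← ENNReal.tsum_add, ← Q.tsum_coe]
  exact tsum_congr fun n => congrFun (Set.indicator_compl_add_self _ _) n

end prob

def signSet (N : ℕ) (χ : SignType) : Set ℕ := {m | SignType.sign ((m : ℤ) - N) = χ}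

section signSet

variable (Q : PMF ℕ) (N : ℕ)

theorem signSet_zero : signSet N .zero = {N} := by
  ext m
  simp [signSet, SignType.zero_eq_zero, sub_eq_zero]

theorem signSet_pos : signSet N .pos = {m | N < m} := by
  ext m
  simp [signSet, SignType.pos_eq_one, sign_eq_one_iff]

theorem signSet_neg : signSet N .neg = {m | m < N} := by
  ext m
  simp [signSet, SignType.neg_eq_neg_one, sign_eq_neg_one_iff]

theorem prob_signSet_zero : prob Q (signSet N .zero) = Q N := by
  rw [signSet_zero, prob_singleton]

variable {Q N}

theorem prob_signSet_pos_of_support_le (h : ∀ m ∈ Q.support, m ≤ N) :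
    prob Q (signSet N .pos) = 0 := by
  rw [prob_eq_toOuterMeasure, PMF.toOuterMeasure_apply_eq_zero_iff, signSet_pos,
    Set.disjoint_left]
  exact fun m hm hlt => (h m hm).not_gt hlt

theorem prob_signSet_neg_of_support_le (h : ∀ m ∈ Q.support, m ≤ N) :
    prob Q (signSet N .neg) = 1 - Q N := by
  rw [← prob_compl_singleton, prob_eq_toOuterMeasure, prob_eq_toOuterMeasure]
  refine Q.toOuterMeasure_apply_eq_of_inter_support_eq (Set.ext fun m => ?_)
  simp only [signSet_neg, Set.mem_inter_iff, Set.mem_ofPred_eq, Set.mem_compl_singleton_iff]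
  exact and_congr_left fun hm => by have := h m hm; omega

theorem prob_signSet_neg_of_le_support (h : ∀ m ∈ Q.support, N ≤ m) :
    prob Q (signSet N .neg) = 0 := by
  rw [prob_eq_toOuterMeasure, PMF.toOuterMeasure_apply_eq_zero_iff, signSet_neg,
    Set.disjoint_left]
  exact fun m hm hlt => (h m hm).not_gt hlt

theorem prob_signSet_pos_of_le_support (h : ∀ m ∈ Q.support, N ≤ m) :
    prob Q (signSet N .pos) = 1 - Q N := by
  rw [← prob_compl_singleton, prob_eq_toOuterMeasure, prob_eq_toOuterMeasure]
  refine Q.toOuterMeasure_apply_eq_of_inter_support_eq (Set.ext fun m => ?_)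
  simp only [signSet_pos, Set.mem_inter_iff, Set.mem_ofPred_eq, Set.mem_compl_singleton_iff]
  exact and_congr_left fun hm => by have := h m hm; omega

end signSet

theorem fchi_eq_tsum (p ptilde : PMF ℕ) (χ : SignType) :
    fchi p ptilde χ =
      ∑' k, p k * prob (addConv ptilde (Spmf p k)) (signSet (k * (k + 1)) χ) := by
  simp only [fchi, signSet, addConv, Nat.cast_mul, Nat.cast_add, Nat.cast_one]

theorem tsum_mul_eq_add_of_pair {f g : ℕ → ℝ≥0∞} {b c : ℕ} (hbc : b ≠ c)
    (hf : ∀ k, k ≠ b → k ≠ c → f k = 0) : ∑' k, f k * g k = f b * g b + f c * g c := by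
  rw [tsum_eq_sum (s := {b, c}), Finset.sum_pair hbc]
  intro k hk
  simp only [Finset.mem_insert, Finset.mem_singleton, not_or] at hk
  rw [hf k hk.1 hk.2, zero_mul]

theorem support_subset_of_apply_eq_mul_div {p ptilde : PMF ℕ} {μ : ℝ≥0∞}
    (htilde : ∀ k : ℕ, ptilde k = k * p k / μ) : ptilde.support ⊆ p.support :=
  fun k hk hpk => hk (by rw [htilde, hpk, mul_zero, ENNReal.zero_div])

section TwoPoint

variable {p : PMF ℕ} {q : ℝ≥0∞} {a : ℕ}

theorem mem_Icc_of_mem_support_of_two_point (ha : 1 ≤ a)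
    (hp : ∀ k : ℕ, k ≠ 1 → k ≠ a → p k = 0) : ∀ x ∈ p.support, x ∈ Set.Icc 1 a := by
  intro x hx
  by_contra h
  exact hx (hp x (by grind) (by grind))

theorem fchi_eq_of_two_point (ptilde : PMF ℕ) (χ : SignType) (ha : a ≠ 1) (hp1 : p 1 = q)
    (hpa : p a = 1 - q) (hp : ∀ k : ℕ, k ≠ 1 → k ≠ a → p k = 0) :
    fchi p ptilde χ = q * prob (addConv ptilde p) (signSet (1 + 1) χ) +
      (1 - q) * prob (addConv ptilde (Spmf p a)) (signSet (a + a * a) χ) := by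
  rw [fchi_eq_tsum, tsum_mul_eq_add_of_pair ha.symm hp, hp1, hpa, Spmf_one, Nat.one_mul,
    mul_add_one, add_comm (a * a)]

end TwoPoint

theorem two_point_densities_general (p ptilde : PMF ℕ) (q : ℝ≥0∞) (a : ℕ)
    (ha : 2 ≤ a)
    (hp1 : p 1 = q) (hpa : p a = 1 - q) (hp : ∀ k : ℕ, k ≠ 1 → k ≠ a → p k = 0)
    (μ : ℝ≥0∞)
    (htilde : ∀ k : ℕ, ptilde k = k * p k / μ) :
    fchi p ptilde SignType.pos = q - q ^ 3 / μ ∧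
    fchi p ptilde SignType.zero = (q ^ 3 + a * (1 - q) ^ (a + 2)) / μ ∧
    fchi p ptilde SignType.neg = (1 - q) - a * (1 - q) ^ (a + 2) / μ := by
  have hq : q ≠ ∞ := hp1 ▸ p.apply_ne_top 1
  have hp_Icc := mem_Icc_of_mem_support_of_two_point (by omega) hp
  have hpt_Icc x hx := hp_Icc x (support_subset_of_apply_eq_mul_div htilde hx)
  have hSa := le_mul_of_mem_support_Spmf (fun x hx => (hp_Icc x hx).2) a
  have hge := add_le_of_mem_support_addConv (fun x hx => (hpt_Icc x hx).1)
    (fun x hx => (hp_Icc x hx).1)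
  have hle := le_add_of_mem_support_addConv (fun x hx => (hpt_Icc x hx).2) hSa
  have hmin : addConv ptilde p (1 + 1) = q / μ * q := by
    rw [addConv_apply_add_of_le_support (fun x hx => (hpt_Icc x hx).1)
      (fun x hx => (hp_Icc x hx).1), htilde, hp1, Nat.cast_one, one_mul]
  have hmax : addConv ptilde (Spmf p a) (a + a * a) = a * (1 - q) / μ * (1 - q) ^ a := by
    rw [addConv_apply_add_of_support_le (fun x hx => (hpt_Icc x hx).2) hSa, htilde,
      Spmf_apply_mul (fun x hx => (hp_Icc x hx).2), hpa]
  have hfchi χ := fchi_eq_of_two_point ptilde χ (by omega) hp1 hpa hp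
  refine ⟨?_, ?_, ?_⟩
  · rw [hfchi, prob_signSet_pos_of_le_support hge, prob_signSet_pos_of_support_le hle, hmin,
      ENNReal.mul_sub fun _ _ => hq]
    simp only [div_eq_mul_inv]
    ring_nf
  · rw [hfchi, prob_signSet_zero, prob_signSet_zero, hmin, hmax]
    simp only [div_eq_mul_inv]
    ring
  · rw [hfchi, prob_signSet_neg_of_le_support hge, prob_signSet_neg_of_support_le hle, hmax,
      ENNReal.mul_sub fun _ _ => ENNReal.sub_ne_top ENNReal.one_ne_top]
    simp only [div_eq_mul_inv]
    ring_nf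

/-- For the offspring distribution supported on `{1, a}` with `p 1 = q`, `p a = 1 - q`,
the vertex-type densities are `f⁺ = q - q³/μ`, `f⁰ = (q³ + a(1-q)^{a+2})/μ`, and
`f⁻ = (1-q) - a(1-q)^{a+2}/μ`, where `μ = q + a(1-q)`. -/
theorem two_point_densities (p ptilde : PMF ℕ) (q : ℝ≥0∞) (a : ℕ)
    (hq0 : 0 < q) (hq1 : q < 1) (ha : 2 ≤ a)
    (hp1 : p 1 = q) (hpa : p a = 1 - q) (hp : ∀ k : ℕ, k ≠ 1 → k ≠ a → p k = 0)
    (μ : ℝ≥0∞) (hμ : μ = q + a * (1 - q))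
    (htilde : ∀ k : ℕ, ptilde k = k * p k / μ) :
    fchi p ptilde SignType.pos = q - q ^ 3 / μ ∧
    fchi p ptilde SignType.zero = (q ^ 3 + a * (1 - q) ^ (a + 2)) / μ ∧
    fchi p ptilde SignType.neg = (1 - q) - a * (1 - q) ^ (a + 2) / μ :=
  two_point_densities_general p ptilde q a ha hp1 hpa hp μ htilde
end

section
/- Suppose ρ: ℕ → [0,1] is non-increasing (on the support of p) where ρ(k) = P(X̃ + S_k − k(k+1) > 0). Then for any non-negative integer-valued random variable Y independent of X̃ and the S_k, one has P(Y > k) ≥ P(Y > k | X̃ + S_Y − Y(Y+1) > 0) for all k ∈ ℕ₀, i.e., conditioning on positivity makes Y stochastically smaller. -/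
open scoped ENNReal

/-- `ρ(k) = P(X̃ + S_k - k(k+1) > 0)` where `X̃` has the size-biased law `p̃` and is
independent of `S_k`. -/
noncomputable def rho (p ptilde : PMF ℕ) (k : ℕ) : ℝ≥0∞ :=
  prob (ptilde.bind fun xt => (Spmf p k).map fun s => xt + s) {m : ℕ | k * (k + 1) < m}

lemma rho_le_one (p ptilde : PMF ℕ) (k : ℕ) : rho p ptilde k ≤ 1 := by
  unfold rho prob
  calc (∑' n, ({m : ℕ | k * (k + 1) < m}).indicator
        (ptilde.bind fun xt => (Spmf p k).map fun s => xt + s) n)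
      ≤ ∑' n, (ptilde.bind fun xt => (Spmf p k).map fun s => xt + s) n :=
        ENNReal.tsum_le_tsum fun n => Set.indicator_le_self _ _ n
    _ = 1 := (ptilde.bind fun xt => (Spmf p k).map fun s => xt + s).tsum_coe

/-- If `ρ(k) = P(X̃ + S_k - k(k+1) > 0)` is non-increasing, then for any non-negative
integer random variable `Y` (with law `Ylaw`) independent of `X̃` and the `S_k`,
`P(Y > k ∣ X̃ + S_Y - Y(Y+1) > 0) ≤ P(Y > k)` for all `k`: conditioning on positivity
makes `Y` stochastically smaller. -/
theorem conditioning_positivity_stochastically_smaller (p ptilde : PMF ℕ) (μ : ℝ≥0∞)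
    (hμ : μ = ∑' k : ℕ, k * p k) (htilde : ∀ k : ℕ, ptilde k = k * p k / μ)
    (hmono : ∀ k k' : ℕ, k ≤ k' → rho p ptilde k' ≤ rho p ptilde k)
    (Ylaw : PMF ℕ) (hpos : (∑' l : ℕ, Ylaw l * rho p ptilde l) ≠ 0) :
    ∀ k : ℕ,
      (∑' s : ℕ, if k < s then Ylaw s * rho p ptilde s else 0) /
          (∑' l : ℕ, Ylaw l * rho p ptilde l) ≤
        ∑' s : ℕ, if k < s then Ylaw s else 0 := by
  intro k
  set ρ := rho p ptilde with hρ
  set A := ∑' s : ℕ, if k < s then Ylaw s * ρ s else 0 with hA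
  set B := ∑' s : ℕ, if k < s then (0 : ℝ≥0∞) else Ylaw s * ρ s with hB
  set P := ∑' s : ℕ, if k < s then Ylaw s else 0 with hP
  set Q := ∑' s : ℕ, if k < s then (0 : ℝ≥0∞) else Ylaw s with hQ
  set T := ∑' l : ℕ, Ylaw l * ρ l with hT
  have hsplitT : T = A + B := by
    rw [hT, hA, hB, ← ENNReal.tsum_add]
    congr 1; funext s; by_cases h : k < s <;> simp [h]
  have hsplit1 : P + Q = 1 := by
    rw [hP, hQ, ← ENNReal.tsum_add, ← Ylaw.tsum_coe]
    congr 1; funext s; by_cases h : k < s <;> simp [h]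
  have hTle : T ≤ 1 := by
    rw [hT, ← Ylaw.tsum_coe]
    exact ENNReal.tsum_le_tsum fun l =>
      mul_le_of_le_one_right zero_le (rho_le_one p ptilde l)
  have hTne : T ≠ ⊤ := (lt_of_le_of_lt hTle (by norm_num)).ne
  -- key inequality: A * Q ≤ P * B
  have key : A * Q ≤ P * B := by
    rw [hA, hQ, hP, hB, ← ENNReal.tsum_mul_right, ← ENNReal.tsum_mul_right]
    refine ENNReal.tsum_le_tsum fun s => ?_
    by_cases hs : k < s
    · simp only [hs, if_true]
      rw [mul_assoc]
      refine mul_le_mul_right ?_ _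
      rw [← ENNReal.tsum_mul_left]
      refine ENNReal.tsum_le_tsum fun l => ?_
      by_cases hl : k < l
      · simp [hl]
      · simp only [hl, if_false]
        have : ρ s ≤ ρ l := hmono l s (le_trans (not_lt.mp hl) hs.le)
        calc ρ s * Ylaw l ≤ ρ l * Ylaw l := mul_le_mul_left this _
          _ = Ylaw l * ρ l := mul_comm _ _
    · simp [hs]
  have main : A ≤ P * T := by
    calc A = A * (P + Q) := by rw [hsplit1, mul_one]
      _ = A * P + A * Q := by ring
      _ ≤ A * P + P * B := add_le_add_right key _
      _ = P * (A + B) := by ring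
      _ = P * T := by rw [hsplitT]
  rw [ENNReal.div_le_iff_le_mul (Or.inl hpos) (Or.inl hTne)]
  exact main
end

section
/- Let ρ: ℕ₀ → [0,1] be non-increasing and let X be an ℕ₀-valued random variable. Then the map k ↦ E[ρ(X) | X > k] is non-increasing on the set of k with P(X > k) > 0. -/
open scoped ENNReal

/-- For a non-increasing `ρ : ℕ₀ → [0,1]` and an `ℕ₀`-valued random variable `X` with law
`Xlaw`, the map `k ↦ E[ρ(X) ∣ X > k] = ∑_{s>k} P(X=s)ρ(s) / P(X>k)` is non-increasing on
the set of `k` with `P(X > k) > 0`. -/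
theorem cond_expectation_antitone (Xlaw : PMF ℕ) (ρ : ℕ → ℝ≥0∞)
    (hρ1 : ∀ n : ℕ, ρ n ≤ 1) (hρ : ∀ k k' : ℕ, k ≤ k' → ρ k' ≤ ρ k) :
    ∀ k k' : ℕ, k ≤ k' →
      (∑' s : ℕ, if k < s then Xlaw s else 0) ≠ 0 →
      (∑' s : ℕ, if k' < s then Xlaw s else 0) ≠ 0 →
      (∑' s : ℕ, if k' < s then Xlaw s * ρ s else 0) /
          (∑' s : ℕ, if k' < s then Xlaw s else 0) ≤
        (∑' s : ℕ, if k < s then Xlaw s * ρ s else 0) /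
          (∑' s : ℕ, if k < s then Xlaw s else 0) := by
  intro k k' hkk' hA hB
  set r : ℝ≥0∞ := ρ (k' + 1) with hr
  set DA := ∑' s : ℕ, if k < s then Xlaw s else 0 with hDA
  set DB := ∑' s : ℕ, if k' < s then Xlaw s else 0 with hDB
  set NA := ∑' s : ℕ, if k < s then Xlaw s * ρ s else 0 with hNA
  set NB := ∑' s : ℕ, if k' < s then Xlaw s * ρ s else 0 with hNB
  set E := ∑' s : ℕ, if k < s ∧ s ≤ k' then Xlaw s else 0 with hE
  set M := ∑' s : ℕ, if k < s ∧ s ≤ k' then Xlaw s * ρ s else 0 with hM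
  -- splitting
  have hsplitD : DA = E + DB := by
    rw [hDA, hE, hDB, ← ENNReal.tsum_add]
    refine tsum_congr fun s => ?_
    by_cases h1 : k' < s
    · have h2 : k < s := lt_of_le_of_lt hkk' h1
      simp [h1, h2, not_le.mpr h1]
    · by_cases h2 : k < s <;> simp [h1, h2, Nat.le_of_lt_succ, not_lt.mp h1]
  have hsplitN : NA = M + NB := by
    rw [hNA, hM, hNB, ← ENNReal.tsum_add]
    refine tsum_congr fun s => ?_
    by_cases h1 : k' < s
    · have h2 : k < s := lt_of_le_of_lt hkk' h1
      simp [h1, h2, not_le.mpr h1]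
    · by_cases h2 : k < s <;> simp [h1, h2, not_lt.mp h1]
  -- finiteness
  have hD1 : DA ≤ 1 := by
    calc DA ≤ ∑' s : ℕ, Xlaw s := by
          refine ENNReal.tsum_le_tsum fun s => ?_
          split <;> simp
      _ = 1 := Xlaw.tsum_coe
  have hDAt : DA ≠ ∞ := ne_top_of_le_ne_top ENNReal.one_ne_top hD1
  have hDBle : DB ≤ DA := by rw [hsplitD]; exact le_add_self
  have hDBt : DB ≠ ∞ := ne_top_of_le_ne_top hDAt hDBle
  -- key estimates
  have hNBle : NB ≤ r * DB := by
    rw [hNB, hDB, ← ENNReal.tsum_mul_left]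
    refine ENNReal.tsum_le_tsum fun s => ?_
    split
    · rename_i h
      rw [mul_comm (Xlaw s) (ρ s)]
      exact mul_le_mul_left (hρ _ _ h) _
    · simp
  have hMge : r * E ≤ M := by
    rw [hM, hE, ← ENNReal.tsum_mul_left]
    refine ENNReal.tsum_le_tsum fun s => ?_
    split
    · rename_i h
      rw [mul_comm (Xlaw s) (ρ s)]
      exact mul_le_mul_left (hρ _ _ (by omega)) _
    · simp
  rw [ENNReal.div_le_iff hB hDBt, mul_comm, ← mul_div_assoc,
    ENNReal.le_div_iff_mul_le (Or.inl hA) (Or.inl hDAt), mul_comm DB NA]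
  calc NB * DA = NB * E + NB * DB := by rw [hsplitD, mul_add]
    _ ≤ r * DB * E + NB * DB := by
        exact add_le_add_left (mul_le_mul_left hNBle E) _
    _ = r * E * DB + NB * DB := by ring
    _ ≤ M * DB + NB * DB := add_le_add_left (mul_le_mul_left hMge DB) _
    _ = NA * DB := by rw [hsplitN, add_mul]
end

section
/- Under the monotonicity condition that k ↦ P(k̃ + S_k − k(k+1) > 0) is non-increasing on the support of p for each k̃ in the support of p̃, the edge density of (+,+) pairs satisfies f⁺⁺ ≤ f̃⁺ · f⁺, where f⁺ = ∑_k p_k P(X̃ + S_k − k(k+1) > 0), f̃⁺ = ∑_{k̃} p̃_{k̃} P(X̃ + S_{k̃} − k̃(k̃+1) > 0), and f⁺⁺ = P(X̃* + X + S_{X̃−1} − X̃(X̃+1) > 0, X̃ + S*_X − X(X+1) > 0) with all indicated random variables independent. -/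
open scoped ENNReal

/-- `f⁺ = P(X̃ + S_X - X(X+1) > 0) = ∑_k p_k P(X̃ + S_k - k(k+1) > 0)`. -/
noncomputable def fplus (p ptilde : PMF ℕ) : ℝ≥0∞ :=
  ∑' k : ℕ, p k *
    prob (ptilde.bind fun xt => (Spmf p k).map fun s => xt + s) {m : ℕ | k * (k + 1) < m}

/-- `f̃⁺ = ∑_{k̃} p̃_{k̃} P(X̃ + S_{k̃} - k̃(k̃+1) > 0)`, the density of positive parents. -/
noncomputable def ftildeplus (p ptilde : PMF ℕ) : ℝ≥0∞ :=
  ∑' kt : ℕ, ptilde kt *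
    prob (ptilde.bind fun xt => (Spmf p kt).map fun s => xt + s)
      {m : ℕ | kt * (kt + 1) < m}

/-- `f⁺⁺ = P(X̃* + X + S_{X̃-1} - X̃(X̃+1) > 0, X̃ + S*_X - X(X+1) > 0)`, with all indicated
random variables independent; by independence it factorises as the double sum below. -/
noncomputable def fplusplus (p ptilde : PMF ℕ) : ℝ≥0∞ :=
  ∑' kt : ℕ, ∑' k : ℕ, ptilde kt * p k *
    prob (ptilde.bind fun xs => (Spmf p (kt - 1)).map fun s => xs + k + s)
      {m : ℕ | kt * (kt + 1) < m} *
    prob (Spmf p k) {s : ℕ | k * (k + 1) < kt + s}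

/-! ### Auxiliary lemmas -/

lemma prob_eq (q : PMF ℕ) (A : Set ℕ) : prob q A = q.toOuterMeasure A :=
  (q.toOuterMeasure_apply A).symm

lemma prob_bind (q : PMF ℕ) (f : ℕ → PMF ℕ) (A : Set ℕ) :
    prob (q.bind f) A = ∑' a, q a * prob (f a) A := by
  simp [prob_eq]

lemma prob_map (q : PMF ℕ) (g : ℕ → ℕ) (A : Set ℕ) :
    prob (q.map g) A = prob q (g ⁻¹' A) := by
  rw [prob_eq, prob_eq, PMF.toOuterMeasure_map_apply]

lemma prob_mono (q : PMF ℕ) {A B : Set ℕ} (h : A ⊆ B) : prob q A ≤ prob q B := by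
  rw [prob_eq, prob_eq]; exact q.toOuterMeasure.mono h

lemma prob_setOf (q : PMF ℕ) (P : ℕ → Prop) [DecidablePred P] :
    prob q {n | P n} = ∑' n, if P n then q n else 0 := by
  refine tsum_congr fun n => ?_
  rw [Set.indicator_apply]
  congr 1

lemma rearrange {a b c d : ℝ≥0∞} (hab : a ≤ b) (hcd : c ≤ d) :
    b * c + a * d ≤ b * d + a * c := by
  obtain ⟨e, rfl⟩ := exists_add_of_le hcd
  rw [mul_add a c e, mul_add b c e, ← add_assoc, add_right_comm (b*c) (b*e) (a*c)]
  exact add_le_add_right (mul_le_mul_left hab e) _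

lemma half_le {a b : ℝ≥0∞} (h : a + a ≤ b + b) : a ≤ b := by
  rw [← two_mul, ← two_mul] at h
  exact (ENNReal.mul_le_mul_iff_right (by norm_num) (by norm_num)).mp h

/-- Weighted Chebyshev sum inequality in `ℝ≥0∞`: if `f` is antitone and `g` is monotone on the
support of the weights `w`, which sum to `1`, then `∑ w (f g) ≤ (∑ w f) (∑ w g)`. -/
lemma chebyshev (w f g : ℕ → ℝ≥0∞) (hw : ∑' i, w i = 1)
    (h : ∀ i j, w i ≠ 0 → w j ≠ 0 → i ≤ j → f j ≤ f i ∧ g i ≤ g j) :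
    ∑' i, w i * (f i * g i) ≤ (∑' i, w i * f i) * (∑' i, w i * g i) := by
  classical
  have key : ∀ i j, w i * w j * (f i * g i) + w j * w i * (f j * g j)
      ≤ w i * w j * (f i * g j) + w j * w i * (f j * g i) := by
    intro i j
    by_cases hi : w i = 0; · simp [hi]
    by_cases hj : w j = 0; · simp [hj]
    rw [mul_comm (w j) (w i), ← mul_add, ← mul_add]
    refine mul_le_mul_right ?_ _
    rcases le_total i j with hij | hij
    · obtain ⟨hf, hg⟩ := h i j hi hj hij
      exact rearrange hf hg
    · obtain ⟨hf, hg⟩ := h j i hj hi hij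
      rw [add_comm, add_comm (f i * g j)]
      exact rearrange hf hg
  have hLeq : ∑' i, w i * (f i * g i) = ∑' i, ∑' j, w i * w j * (f i * g i) := by
    refine tsum_congr fun i => ?_
    calc w i * (f i * g i) = (w i * (f i * g i)) * ∑' j, w j := by rw [hw, mul_one]
      _ = ∑' j, w i * w j * (f i * g i) := by
          rw [← ENNReal.tsum_mul_left]
          exact tsum_congr fun j => by ring
  have hReq : (∑' i, w i * f i) * (∑' i, w i * g i)
      = ∑' i, ∑' j, w i * w j * (f i * g j) := by
    rw [← ENNReal.tsum_mul_right]
    refine tsum_congr fun i => ?_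
    rw [← ENNReal.tsum_mul_left]
    exact tsum_congr fun j => by ring
  have hswapL : (∑' i, ∑' j, w i * w j * (f i * g i))
      = ∑' i, ∑' j, w j * w i * (f j * g j) := ENNReal.tsum_comm
  have hswapR : (∑' i, ∑' j, w i * w j * (f i * g j))
      = ∑' i, ∑' j, w j * w i * (f j * g i) := ENNReal.tsum_comm
  rw [hLeq, hReq]
  refine half_le ?_
  calc (∑' i, ∑' j, w i * w j * (f i * g i)) + (∑' i, ∑' j, w i * w j * (f i * g i))
      = ∑' i, ∑' j, (w i * w j * (f i * g i) + w j * w i * (f j * g j)) := by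
        nth_rewrite 2 [hswapL]
        rw [← ENNReal.tsum_add]
        exact tsum_congr fun i => (ENNReal.tsum_add).symm
    _ ≤ ∑' i, ∑' j, (w i * w j * (f i * g j) + w j * w i * (f j * g i)) :=
        ENNReal.tsum_le_tsum fun i => ENNReal.tsum_le_tsum fun j => key i j
    _ = (∑' i, ∑' j, w i * w j * (f i * g j)) + (∑' i, ∑' j, w i * w j * (f i * g j)) := by
        nth_rewrite 2 [hswapR]
        rw [← ENNReal.tsum_add]
        exact tsum_congr fun i => ENNReal.tsum_add

/-- Averaging the law of `X̃* + k + S_j` over `k ∼ p` gives the law of `X̃* + S_{j+1}`. -/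
lemma sum_P1 (p ptilde : PMF ℕ) (j c : ℕ) :
    (∑' k, p k * prob (ptilde.bind fun xs => (Spmf p j).map fun s => xs + k + s) {m | c < m})
      = prob (ptilde.bind fun xt => (Spmf p (j+1)).map fun s => xt + s) {m | c < m} := by
  classical
  have hR : prob (ptilde.bind fun xt => (Spmf p (j+1)).map fun s => xt + s) {m | c < m}
      = ∑' xt, ∑' s, ∑' x, ptilde xt * (Spmf p j s * (if c < xt + (s + x) then p x else 0)) := by
    rw [prob_bind]
    refine tsum_congr fun xt => ?_
    rw [prob_map, show Spmf p (j+1) = (Spmf p j).bind fun s => p.map fun x => s + x from rfl,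
      prob_bind, ← ENNReal.tsum_mul_left]
    refine tsum_congr fun s => ?_
    rw [prob_map,
      show ((fun x => s + x) ⁻¹' ((fun s' => xt + s') ⁻¹' {m | c < m}))
        = {x | c < xt + (s + x)} from rfl,
      prob_setOf, ← ENNReal.tsum_mul_left, ← ENNReal.tsum_mul_left]
  have hL : (∑' k, p k *
        prob (ptilde.bind fun xs => (Spmf p j).map fun s => xs + k + s) {m | c < m})
      = ∑' k, ∑' xt, ∑' s, p k * (ptilde xt * (if c < xt + k + s then Spmf p j s else 0)) := by
    refine tsum_congr fun k => ?_
    rw [prob_bind, ← ENNReal.tsum_mul_left]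
    refine tsum_congr fun xt => ?_
    rw [prob_map,
      show ((fun s => xt + k + s) ⁻¹' {m | c < m}) = {s | c < xt + k + s} from rfl,
      prob_setOf, ← ENNReal.tsum_mul_left, ← ENNReal.tsum_mul_left]
  rw [hL, hR, ENNReal.tsum_comm]
  refine tsum_congr fun xt => ?_
  rw [ENNReal.tsum_comm]
  refine tsum_congr fun s => ?_
  refine tsum_congr fun k => ?_
  by_cases hc : c < xt + k + s
  · rw [if_pos hc, if_pos (by omega)]; ring
  · rw [if_neg hc, if_neg (by omega)]; simp

/-- Under the monotonicity condition, positive vertices are negatively correlated along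
the edges of the Galton-Watson tree: `f⁺⁺ ≤ f̃⁺ · f⁺`. -/
theorem positive_negatively_correlated (p ptilde : PMF ℕ)
    (hp0 : p 0 = 0) (hp1 : p 1 ≠ 1)
    (μ : ℝ≥0∞) (hμ : μ = ∑' k : ℕ, k * p k) (hμfin : μ ≠ ⊤)
    (htilde : ∀ k : ℕ, ptilde k = k * p k / μ)
    (hmono : ∀ kt : ℕ, ptilde kt ≠ 0 →
      ∀ k k' : ℕ, p k ≠ 0 → p k' ≠ 0 → k ≤ k' →
        prob (Spmf p k') {s : ℕ | k' * (k' + 1) < kt + s} ≤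
          prob (Spmf p k) {s : ℕ | k * (k + 1) < kt + s}) :
    fplusplus p ptilde ≤ ftildeplus p ptilde * fplus p ptilde := by
  classical
  -- Abbreviations
  set P1 : ℕ → ℕ → ℝ≥0∞ := fun kt k =>
    prob (ptilde.bind fun xs => (Spmf p (kt - 1)).map fun s => xs + k + s)
      {m : ℕ | kt * (kt + 1) < m} with hP1def
  set P2 : ℕ → ℕ → ℝ≥0∞ := fun kt k =>
    prob (Spmf p k) {s : ℕ | k * (k + 1) < kt + s} with hP2def
  set Q : ℕ → ℝ≥0∞ := fun kt =>
    prob (ptilde.bind fun xt => (Spmf p kt).map fun s => xt + s)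
      {m : ℕ | kt * (kt + 1) < m} with hQdef
  set T : ℕ → ℝ≥0∞ := fun kt => ∑' k, p k * P2 kt k with hTdef
  have hsupp : ∀ kt : ℕ, ptilde kt ≠ 0 → p kt ≠ 0 := by
    intro kt h hc
    exact h (by rw [htilde kt, hc]; simp)
  -- monotonicity of P1 in the second argument
  have hP1mono : ∀ kt k k', k ≤ k' → P1 kt k ≤ P1 kt k' := by
    intro kt k k' hk
    rw [hP1def]
    simp only
    rw [prob_bind, prob_bind]
    refine ENNReal.tsum_le_tsum fun xs => mul_le_mul_right ?_ _
    rw [prob_map, prob_map]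
    refine prob_mono _ fun s hs => ?_
    simp only [Set.mem_preimage, Set.mem_setOf_eq] at *
    omega
  -- monotonicity of T
  have hTmono : ∀ kt kt', kt ≤ kt' → T kt ≤ T kt' := by
    intro kt kt' h
    refine ENNReal.tsum_le_tsum fun k => mul_le_mul_right ?_ _
    refine prob_mono _ fun s hs => ?_
    simp only [Set.mem_setOf_eq] at *
    omega
  -- antitonicity of Q on the support of ptilde
  have hQanti : ∀ kt kt', ptilde kt ≠ 0 → ptilde kt' ≠ 0 → kt ≤ kt' → Q kt' ≤ Q kt := by
    intro kt kt' h h' hle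
    rw [hQdef]
    simp only
    rw [prob_bind, prob_bind]
    refine ENNReal.tsum_le_tsum fun xt => ?_
    by_cases hxt : ptilde xt = 0
    · simp [hxt]
    refine mul_le_mul_right ?_ _
    rw [prob_map, prob_map,
      show ((fun s => xt + s) ⁻¹' {m | kt' * (kt' + 1) < m})
        = {s | kt' * (kt' + 1) < xt + s} from rfl,
      show ((fun s => xt + s) ⁻¹' {m | kt * (kt + 1) < m})
        = {s | kt * (kt + 1) < xt + s} from rfl]
    exact hmono xt hxt kt kt' (hsupp kt h) (hsupp kt' h') hle
  -- sum of P1 against p equals Q (for kt in the support of ptilde, hence kt ≥ 1)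
  have hsumP1 : ∀ kt : ℕ, kt ≠ 0 → (∑' k, p k * P1 kt k) = Q kt := by
    intro kt hkt
    obtain ⟨j, rfl⟩ := Nat.exists_eq_succ_of_ne_zero hkt
    rw [hP1def, hQdef]
    simp only [Nat.succ_sub_one]
    exact sum_P1 p ptilde j ((j + 1) * (j + 1 + 1))
  have hpt0 : ptilde 0 = 0 := by rw [htilde 0]; simp
  -- rewrite fplusplus
  have step1 : fplusplus p ptilde = ∑' kt, ptilde kt * ∑' k, p k * (P2 kt k * P1 kt k) := by
    unfold fplusplus
    refine tsum_congr fun kt => ?_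
    rw [← ENNReal.tsum_mul_left]
    exact tsum_congr fun k => by ring
  -- rewrite fplus
  have hfplus : fplus p ptilde = ∑' kt, ptilde kt * T kt := by
    unfold fplus
    have : ∀ k : ℕ, p k *
        prob (ptilde.bind fun xt => (Spmf p k).map fun s => xt + s) {m : ℕ | k * (k + 1) < m}
        = ∑' xt, p k * (ptilde xt * P2 xt k) := by
      intro k
      rw [prob_bind, ← ENNReal.tsum_mul_left]
      refine tsum_congr fun xt => ?_
      rw [prob_map]
      rfl
    rw [tsum_congr this, ENNReal.tsum_comm]
    refine tsum_congr fun xt => ?_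
    rw [hTdef]
    simp only
    rw [← ENNReal.tsum_mul_left]
    exact tsum_congr fun k => by ring
  have hftilde : ftildeplus p ptilde = ∑' kt, ptilde kt * Q kt := rfl
  calc fplusplus p ptilde
      = ∑' kt, ptilde kt * ∑' k, p k * (P2 kt k * P1 kt k) := step1
    _ ≤ ∑' kt, ptilde kt * (Q kt * T kt) := by
        refine ENNReal.tsum_le_tsum fun kt => ?_
        by_cases hkt : ptilde kt = 0
        · simp [hkt]
        refine mul_le_mul_right ?_ _
        have hkt0 : kt ≠ 0 := fun h => hkt (h ▸ hpt0)
        calc (∑' k, p k * (P2 kt k * P1 kt k))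
            ≤ (∑' k, p k * P2 kt k) * (∑' k, p k * P1 kt k) := by
              refine chebyshev (fun k => p k) (P2 kt) (P1 kt) p.tsum_coe fun k k' hk hk' hle =>
                ⟨hmono kt hkt k k' hk hk' hle, hP1mono kt k k' hle⟩
          _ = Q kt * T kt := by rw [hsumP1 kt hkt0, mul_comm]
    _ ≤ (∑' kt, ptilde kt * Q kt) * (∑' kt, ptilde kt * T kt) := by
        refine chebyshev (fun kt => ptilde kt) Q T ptilde.tsum_coe fun kt kt' h h' hle =>
          ⟨hQanti kt kt' h h' hle, hTmono kt kt' hle⟩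
    _ = ftildeplus p ptilde * fplus p ptilde := by rw [hftilde, hfplus]
end
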